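/- arXiv:1111.1073 — 11 statements merged into one kernel-verified Lean document; each statement's English description precedes it below -/
import Mathlib

section
/- Let τ ∈ ℂ with Im τ > 0 and let L_τ = {m + k·τ : m, k ∈ ℤ}. The following are equivalent: (1) there exist an integer n ≥ 2, a complex number g with g ∉ L_τ and n·g ∈ L_τ, and a complex number λ such that λ·L_τ = L_τ + ℤ·g (i.e. the elliptic curve ℂ/L_τ admits a nontrivial finite cyclic subgroup C with (ℂ/L_τ)/C ≅ ℂ/L_τ); (2) there exist u, v ∈ ℚ with τ² = u·τ + v. Moreover, when (2) holds one necessarily has u² + 4v < 0 (i.e. the curve has complex multiplication). -/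
/-!
If `λ·L = L + ℤg` with `L = ℤ + ℤτ`, then `μ = λ⁻¹` maps `L` into itself, so `μ = a + bτ` and
`μτ ∈ L`. For `b ≠ 0` this is a rational quadratic equation for `τ`. For `b = 0` we get
`L + ℤg = a⁻¹L`, whose quotient by `L` is `(ℤ/a)²`; it is cyclic only for `a = ±1`, which forces
`g ∈ L`.

Conversely, if `qτ² = pτ + r` over `ℤ`, take `α = s - p + qτ` with `s ≡ 1 (mod q)`. Then
`α·(s - qτ) = N := s² - ps - qr` and `αL + ℤ = L` because `gcd(s, q) = 1`, i.e.
`α⁻¹L = L + ℤα⁻¹`; the point `g = α⁻¹` has order `N` modulo `L`, and `N ≥ 2` for `s` large.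
-/

noncomputable section

/-- The lattice `ℤ + ℤτ` as a subset of `ℂ`. -/
def latt (τ : ℂ) : Set ℂ := {z | ∃ m k : ℤ, z = (m : ℂ) + (k : ℂ) * τ}

/-- The additive subgroup of `ℂ` generated by the lattice `ℤ + ℤτ` and a point `g`. -/
def lattAdj (τ g : ℂ) : Set ℂ := {z | ∃ m k l : ℤ, z = (m : ℂ) + (k : ℂ) * τ + (l : ℂ) * g}

/-- Modulo `a`: `l₁ = l₁ (l₂ f) = l₂ (l₁ f) = 0`, so `1 = l₁ e = 0`. -/
theorem dvd_one_of_mul_add_mul_eq {R : Type*} [CommRing R] {a m₁ k₁ k₂ l₁ l₂ e f : R}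
    (h₁₁ : a * m₁ + l₁ * e = 1) (h₁₂ : a * k₁ + l₁ * f = 0) (h₂₂ : a * k₂ + l₂ * f = 1) :
    a ∣ 1 :=
  ⟨a * m₁ * k₂ + m₁ * l₂ * f + l₁ * e * k₂ - k₁ * l₂ * e, by
    linear_combination -(a * k₂ + l₂ * f) * h₁₁ - h₂₂ + l₂ * e * h₁₂⟩

theorem sq_add_four_mul_eq_neg_four_mul_im_sq {τ : ℂ} (hτ : τ.im ≠ 0) {u v : ℝ}
    (h : τ ^ 2 = u * τ + v) : u ^ 2 + 4 * v = -4 * τ.im ^ 2 := by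
  have him := congrArg Complex.im h
  have hre := congrArg Complex.re h
  simp only [sq, Complex.mul_im, Complex.mul_re, Complex.add_im, Complex.add_re,
    Complex.ofReal_re, Complex.ofReal_im] at him hre
  have hu : u = 2 * τ.re := mul_right_cancel₀ hτ (by linarith)
  subst hu
  linarith

theorem two_le_sq_sub_mul_sub_mul {p q r s : ℤ} (hq : 0 ≤ q) (hqs : q ≤ s)
    (hs : |p| + |r| + 2 ≤ s) : 2 ≤ s ^ 2 - p * s - q * r := by
  have hs₀ : 0 ≤ s := by linarith [abs_nonneg p, abs_nonneg r]
  have hps : p * s ≤ |p| * s := mul_le_mul_of_nonneg_right (le_abs_self p) hs₀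
  have hqr : q * r ≤ s * |r| :=
    (mul_le_mul_of_nonneg_left (le_abs_self r) hq).trans
      (mul_le_mul_of_nonneg_right hqs (abs_nonneg r))
  have hss : s * (|p| + |r| + 2) ≤ s * s := mul_le_mul_of_nonneg_left hs hs₀
  linarith [abs_nonneg p, abs_nonneg r]

theorem exists_int_quadratic_of_rat_quadratic {τ : ℂ} {u v : ℚ}
    (h : τ ^ 2 = u * τ + v) : ∃ p q r : ℤ, 0 < q ∧ (q : ℂ) * τ ^ 2 = p * τ + r := by
  refine ⟨u.num * v.den, u.den * v.den, v.num * u.den, by positivity, ?_⟩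
  rw [h, Rat.cast_def u, Rat.cast_def v]
  field_simp
  push_cast
  ring

namespace latt

variable {τ : ℂ}

theorem intCast_add_intCast_mul_inj (hτ : τ.im ≠ 0) {m k m' k' : ℤ} :
    (m : ℂ) + k * τ = m' + k' * τ ↔ m = m' ∧ k = k' := by
  refine ⟨fun h => ?_, by rintro ⟨rfl, rfl⟩; rfl⟩
  have hk : k = k' := by
    have him := congrArg Complex.im h
    simp only [Complex.add_im, Complex.intCast_im, Complex.mul_im, Complex.intCast_re,
      zero_add, zero_mul, add_zero] at him
    exact_mod_cast mul_right_cancel₀ hτ him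
  subst hk
  exact ⟨by exact_mod_cast add_right_cancel h, rfl⟩

theorem image_mul_subset_lattAdj {g lam : ℂ} (h₁ : lam ∈ lattAdj τ g)
    (hτ : lam * τ ∈ lattAdj τ g) : (fun x => lam * x) '' latt τ ⊆ lattAdj τ g := by
  rintro _ ⟨_, ⟨m, k, rfl⟩, rfl⟩
  obtain ⟨a, b, c, ha⟩ := h₁
  obtain ⟨d, e, f, hd⟩ := hτ
  exact ⟨m * a + k * d, m * b + k * e, m * c + k * f, by
    push_cast; linear_combination (m : ℂ) * ha + (k : ℂ) * hd⟩

theorem lattAdj_subset_image_mul {g lam : ℂ} (h₁ : 1 ∈ (fun x => lam * x) '' latt τ)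
    (hτ : τ ∈ (fun x => lam * x) '' latt τ) (hg : g ∈ (fun x => lam * x) '' latt τ) :
    lattAdj τ g ⊆ (fun x => lam * x) '' latt τ := by
  rintro _ ⟨m, k, l, rfl⟩
  obtain ⟨_, ⟨a, b, rfl⟩, ha⟩ := h₁
  obtain ⟨_, ⟨c, d, rfl⟩, hc⟩ := hτ
  obtain ⟨_, ⟨e, f, rfl⟩, he⟩ := hg
  refine ⟨_, ⟨m * a + k * c + l * e, m * b + k * d + l * f, rfl⟩, ?_⟩
  simp only at ha hc he ⊢
  push_cast
  linear_combination (m : ℂ) * ha + (k : ℂ) * hc + (l : ℂ) * he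

theorem exists_rat_quadratic_of_mul_eq {a b c d : ℤ} (hb : b ≠ 0)
    (h : ((a : ℂ) + b * τ) * τ = c + d * τ) : ∃ u v : ℚ, τ ^ 2 = u * τ + v := by
  refine ⟨(d - a) / b, c / b, ?_⟩
  have hb' : (b : ℂ) ≠ 0 := by exact_mod_cast hb
  push_cast
  field_simp
  linear_combination h

theorem intCast_mul_eq_of_mem_lattAdj {g z : ℂ} {a e f m k l : ℤ}
    (hg : (a : ℂ) * g = e + f * τ) (hz : z = m + k * τ + l * g) :
    (a : ℂ) * z = ↑(a * m + l * e) + ↑(a * k + l * f) * τ := by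
  rw [hz]
  push_cast
  linear_combination (l : ℂ) * hg

theorem image_inv_intCast_mul_ne_lattAdj (hτ : τ.im ≠ 0) {g : ℂ} (hg : g ∉ latt τ) (a : ℤ) :
    (fun x => (a : ℂ)⁻¹ * x) '' latt τ ≠ lattAdj τ g := by
  intro h
  have mem (z : ℂ) (hz : z ∈ (fun x => (a : ℂ)⁻¹ * x) '' latt τ) : ∃ m k l : ℤ,
      z = m + k * τ + l * g := by rwa [h] at hz
  obtain ⟨_, ⟨e, f, rfl⟩, rfl⟩ : g ∈ (fun x => (a : ℂ)⁻¹ * x) '' latt τ :=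
    h ▸ ⟨0, 0, 1, by push_cast; ring⟩
  have ha : (a : ℂ) ≠ 0 := fun ha => hg ⟨0, 0, by simp [ha]⟩
  have hag : (a : ℂ) * ((a : ℂ)⁻¹ * (e + f * τ)) = e + f * τ := by field_simp
  obtain ⟨m₁, k₁, l₁, h₁⟩ := mem _ ⟨1, ⟨1, 0, by push_cast; ring⟩, rfl⟩
  obtain ⟨m₂, k₂, l₂, h₂⟩ := mem _ ⟨τ, ⟨0, 1, by push_cast; ring⟩, rfl⟩
  have e₁ := intCast_mul_eq_of_mem_lattAdj hag h₁
  have e₂ := intCast_mul_eq_of_mem_lattAdj hag h₂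
  rw [show (a : ℂ) * ((a : ℂ)⁻¹ * 1) = ((1 : ℤ) : ℂ) + ((0 : ℤ) : ℂ) * τ by field_simp; simp,
    intCast_add_intCast_mul_inj hτ] at e₁
  rw [show (a : ℂ) * ((a : ℂ)⁻¹ * τ) = ((0 : ℤ) : ℂ) + ((1 : ℤ) : ℂ) * τ by field_simp; simp,
    intCast_add_intCast_mul_inj hτ] at e₂
  have hunit : a = 1 ∨ a = -1 := Int.isUnit_iff.mp <| isUnit_of_dvd_one <|
    dvd_one_of_mul_add_mul_eq e₁.1.symm e₁.2.symm e₂.2.symm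
  rcases hunit with rfl | rfl
  · exact hg ⟨e, f, by simp⟩
  · exact hg ⟨-e, -f, by push_cast; ring⟩

theorem exists_rat_quadratic_of_image_mul_eq_lattAdj (hτ : τ.im ≠ 0) {g lam : ℂ}
    (hg : g ∉ latt τ) (hlam : (fun x => lam * x) '' latt τ = lattAdj τ g) :
    ∃ u v : ℚ, τ ^ 2 = u * τ + v := by
  obtain ⟨_, ⟨a, b, rfl⟩, h₁⟩ : (1 : ℂ) ∈ (fun x => lam * x) '' latt τ :=
    hlam ▸ ⟨1, 0, 0, by push_cast; ring⟩
  obtain ⟨_, ⟨c, d, rfl⟩, hτ'⟩ : τ ∈ (fun x => lam * x) '' latt τ :=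
    hlam ▸ ⟨0, 1, 0, by push_cast; ring⟩
  simp only at h₁ hτ'
  by_cases hb : b = 0
  · subst hb
    have hlam' : lam = (a : ℂ)⁻¹ := eq_inv_of_mul_eq_one_left (by simpa using h₁)
    exact absurd (hlam' ▸ hlam) (image_inv_intCast_mul_ne_lattAdj hτ hg a)
  · refine exists_rat_quadratic_of_mul_eq (a := a) (c := c) (d := d) hb
      (mul_left_cancel₀ (left_ne_zero_of_mul_eq_one h₁) ?_)
    rw [← mul_assoc, h₁, one_mul, hτ']

section

variable {p q r s K : ℤ} {α : ℂ}

theorem mul_conj_eq (hα : α = ↑(s - p) + q * τ) (h : (q : ℂ) * τ ^ 2 = p * τ + r) :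
    α * (s - q * τ) = ↑(s ^ 2 - p * s - q * r) := by
  rw [hα]
  push_cast
  linear_combination -(q : ℂ) * h

theorem image_inv_mul_eq_lattAdj (hα : α = ↑(s - p) + q * τ)
    (h : (q : ℂ) * τ ^ 2 = p * τ + r) (hs : s = 1 + q * K) (hα₀ : α ≠ 0) : (fun x => α⁻¹ * x) '' latt τ = lattAdj τ α⁻¹ := by
  have hατ : α * τ = r + s * τ := by rw [hα]; push_cast; linear_combination h
  refine (image_mul_subset_lattAdj ⟨0, 0, 1, by push_cast; ring⟩ ?_).antisymm
    (lattAdj_subset_image_mul ⟨α, ⟨s - p, q, hα⟩, inv_mul_cancel₀ hα₀⟩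
      ⟨α * τ, ⟨r, s, hατ⟩, by field_simp⟩ ⟨1, ⟨1, 0, by push_cast; ring⟩, mul_one _⟩)
  -- `τ = (s - Kq) τ = (ατ - r) - K (α - (s - p))`
  refine ⟨-K, 1, K * (s - p) - r, ?_⟩
  field_simp
  rw [hα, hs]
  push_cast
  linear_combination -h

theorem intCast_mul_inv_eq (hα : α = ↑(s - p) + q * τ) (h : (q : ℂ) * τ ^ 2 = p * τ + r)
    (hN : s ^ 2 - p * s - q * r ≠ 0) : ↑(s ^ 2 - p * s - q * r) * α⁻¹ = s - q * τ := by
  have hconj := mul_conj_eq hα h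
  have hα₀ : α ≠ 0 := left_ne_zero_of_mul (hconj ▸ Int.cast_ne_zero.mpr hN)
  rw [← hconj]
  field_simp

theorem inv_notMem (hτ : τ.im ≠ 0) (hα : α = ↑(s - p) + q * τ)
    (h : (q : ℂ) * τ ^ 2 = p * τ + r) (hs : s = 1 + q * K) (hN : 2 ≤ s ^ 2 - p * s - q * r) :
    α⁻¹ ∉ latt τ := by
  rintro ⟨c, d, hcd⟩
  have hNα := intCast_mul_inv_eq hα h (by omega)
  generalize s ^ 2 - p * s - q * r = N at hN hNα
  have hNs : N * c = s ∧ N * d = -q := by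
    rw [← intCast_add_intCast_mul_inj hτ]
    rw [hcd] at hNα
    push_cast at hNα ⊢
    linear_combination hNα
  have hN₁ : N ∣ 1 := ⟨c + d * K, by linear_combination -hs - hNs.1 - K * hNs.2⟩
  linarith [Int.le_of_dvd one_pos hN₁]

end

theorem exists_cyclic_of_int_quadratic (hτ : τ.im ≠ 0) {p q r : ℤ} (hq : 0 < q)
    (h : (q : ℂ) * τ ^ 2 = p * τ + r) : ∃ n : ℕ, 2 ≤ n ∧ ∃ g : ℂ, g ∉ latt τ ∧
      (n : ℂ) * g ∈ latt τ ∧ ∃ lam : ℂ, (fun x => lam * x) '' latt τ = lattAdj τ g := by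
  set K := |p| + |r| + 1
  set s := 1 + q * K
  set α : ℂ := ↑(s - p) + q * τ with hα
  have hN : 2 ≤ s ^ 2 - p * s - q * r := two_le_sq_sub_mul_sub_mul hq.le
    (by nlinarith [abs_nonneg p, abs_nonneg r]) (by nlinarith [abs_nonneg p, abs_nonneg r])
  have hn : (((s ^ 2 - p * s - q * r).toNat : ℕ) : ℂ) = ↑(s ^ 2 - p * s - q * r) := by
    exact_mod_cast Int.toNat_of_nonneg (by omega)
  refine ⟨(s ^ 2 - p * s - q * r).toNat, by omega, α⁻¹, inv_notMem hτ hα h rfl hN,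
    ⟨s, -q, ?_⟩, α⁻¹, image_inv_mul_eq_lattAdj hα h rfl ?_⟩
  · rw [hn, intCast_mul_inv_eq hα h (by omega)]
    push_cast
    ring
  · exact left_ne_zero_of_mul (mul_conj_eq hα h ▸ Int.cast_ne_zero.mpr (by omega))

end latt

theorem stmt_0 (τ : ℂ) (hτ : 0 < τ.im) :
    ((∃ n : ℕ, 2 ≤ n ∧ ∃ g : ℂ, g ∉ latt τ ∧ (n : ℂ) * g ∈ latt τ ∧
        ∃ lam : ℂ, (fun x => lam * x) '' latt τ = lattAdj τ g) ↔
      (∃ u v : ℚ, τ ^ 2 = (u : ℂ) * τ + (v : ℂ))) ∧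
    (∀ u v : ℚ, τ ^ 2 = (u : ℂ) * τ + (v : ℂ) → u ^ 2 + 4 * v < 0) := by
  refine ⟨⟨?_, ?_⟩, fun u v h => ?_⟩
  · rintro ⟨-, -, g, hg, -, lam, hlam⟩
    exact latt.exists_rat_quadratic_of_image_mul_eq_lattAdj hτ.ne' hg hlam
  · rintro ⟨u, v, h⟩
    obtain ⟨p, q, r, hq, hpqr⟩ := exists_int_quadratic_of_rat_quadratic h
    exact latt.exists_cyclic_of_int_quadratic hτ.ne' hq hpqr
  · have hdisc : (u : ℝ) ^ 2 + 4 * v = -4 * τ.im ^ 2 :=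
      sq_add_four_mul_eq_neg_four_mul_im_sq hτ.ne' (by exact_mod_cast h)
    have : ((u ^ 2 + 4 * v : ℚ) : ℝ) < 0 := by
      push_cast
      linarith [pow_pos hτ 2]
    exact_mod_cast this
end
end

section
/- Let τ ∈ ℂ with Im τ > 0, L_τ = {m + k·τ : m, k ∈ ℤ}, and let n ≥ 1 be an integer. There exist g ∈ ℂ and λ ∈ ℂ such that the coset g + L_τ has order exactly n in ℂ/L_τ (i.e. n·g ∈ L_τ and m·g ∉ L_τ for all integers 0 < m < n) and λ·L_τ = L_τ + ℤ·g, if and only if there exist integers a, b, A, B with gcd(a, A, b, B) = 1, a·B − b·A = n, and (a + b·τ)·τ = A + B·τ. -/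
noncomputable section

/-!
Identify `L_τ` with `ℤ × ℤ` through `m + kτ ↦ (m, k)` and put `μ = λ⁻¹`. If `μ = a + bτ` and
`μτ = A + Bτ`, multiplication by `μ` maps `L_τ` onto the sublattice `Λ` spanned by the rows
`(a, b)`, `(A, B)`; then `λ L_τ = L_τ + ℤ g` says `Λ + ℤ h = ℤ × ℤ`, where `h` are the
coordinates of `μ g`, and the order of `g + L_τ` is the order of `h` modulo `Λ`.

The determinant `D = aB - bA` equals `|μ|² > 0` and kills `ℤ × ℤ / Λ` (adjugate), so `n ∣ D`.
Writing the standard basis vectors as elements of `Λ + ℤ h` and expanding their determinant `1`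
shows both `D ∣ n` and that no integer `t > 1` divides `a, b, A, B` (else `Λ ⊆ t ℤ²`).
Conversely, when `gcd(a, A, b, B) = 1` some row `(a, b) + k (A, B)` of `Λ` is primitive; completing
it to a basis of `ℤ × ℤ` by a vector `h` gives `Λ + ℤ h = ℤ × ℤ`, and `m h ∈ Λ` forces `D ∣ m`.
-/

namespace CyclicSelfIsogeny

def cross (x y : ℤ × ℤ) : ℤ := x.1 * y.2 - x.2 * y.1

lemma cross_smul_right (x y : ℤ × ℤ) (m : ℤ) : cross x (m • y) = m * cross x y := by
  simp only [cross, Prod.smul_fst, Prod.smul_snd, smul_eq_mul]; ring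

variable {r₁ r₂ h : ℤ × ℤ}

lemma cross_dvd_cross_of_mem {x y : ℤ × ℤ} (hx : x ∈ AddSubgroup.closure {r₁, r₂})
    (hy : y ∈ AddSubgroup.closure {r₁, r₂}) : cross r₁ r₂ ∣ cross x y := by
  obtain ⟨i, j, rfl⟩ := AddSubgroup.mem_closure_pair.1 hx
  obtain ⟨k, l, rfl⟩ := AddSubgroup.mem_closure_pair.1 hy
  exact ⟨i * l - j * k, by simp only [cross, Prod.fst_add, Prod.snd_add, Prod.smul_fst,
    Prod.smul_snd, smul_eq_mul]; ring⟩

lemma cross_smul_mem_closure (r₁ r₂ v : ℤ × ℤ) : cross r₁ r₂ • v ∈ AddSubgroup.closure {r₁, r₂} :=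
  AddSubgroup.mem_closure_pair.2 ⟨cross v r₂, cross r₁ v, by
    ext <;> simp only [cross, Prod.fst_add, Prod.snd_add, Prod.smul_fst, Prod.smul_snd,
      smul_eq_mul] <;> ring⟩

lemma addOrderOf_dvd_cross (r₁ r₂ h : ℤ × ℤ) :
    (addOrderOf (h : (ℤ × ℤ) ⧸ AddSubgroup.closure {r₁, r₂}) : ℤ) ∣ cross r₁ r₂ := by
  rw [addOrderOf_dvd_iff_zsmul_eq_zero, ← QuotientAddGroup.mk_zsmul,
    QuotientAddGroup.eq_zero_iff]
  exact cross_smul_mem_closure r₁ r₂ h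

lemma cross_dvd_of_smul_mem {r : ℤ × ℤ} (hr : r ∈ AddSubgroup.closure {r₁, r₂})
    (hrh : cross r h = 1) {m : ℤ} (hm : m • h ∈ AddSubgroup.closure {r₁, r₂}) :
    cross r₁ r₂ ∣ m := by
  simpa only [cross_smul_right, hrh, mul_one] using cross_dvd_cross_of_mem hr hm

lemma addOrderOf_mk_eq_natAbs_cross {r : ℤ × ℤ} (hr : r ∈ AddSubgroup.closure {r₁, r₂})
    (hrh : cross r h = 1) :
    addOrderOf (h : (ℤ × ℤ) ⧸ AddSubgroup.closure {r₁, r₂}) = (cross r₁ r₂).natAbs := by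
  refine Nat.dvd_antisymm (Int.natCast_dvd.1 (addOrderOf_dvd_cross r₁ r₂ h)) ?_
  refine Int.natAbs_dvd_natAbs.2 (cross_dvd_of_smul_mem hr hrh (m := addOrderOf _) ?_)
  rw [← QuotientAddGroup.eq_zero_iff, QuotientAddGroup.mk_zsmul, natCast_zsmul]
  exact addOrderOf_nsmul_eq_zero _

lemma dvd_of_sup_zmultiples_eq_top {Λ : AddSubgroup (ℤ × ℤ)}
    (hgen : Λ ⊔ AddSubgroup.zmultiples h = ⊤) {c d : ℤ}
    (hΛ : ∀ x ∈ Λ, ∀ y ∈ Λ, d ∣ c * cross x y) (hh : ∀ x ∈ Λ, d ∣ c * cross x h) :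
    d ∣ c := by
  obtain ⟨x, hx, _, ⟨i, rfl⟩, hx₁⟩ :=
    AddSubgroup.mem_sup.1 (hgen ▸ AddSubgroup.mem_top ((1, 0) : ℤ × ℤ))
  obtain ⟨y, hy, _, ⟨j, rfl⟩, hy₁⟩ :=
    AddSubgroup.mem_sup.1 (hgen ▸ AddSubgroup.mem_top ((0, 1) : ℤ × ℤ))
  -- expand `1 = cross (x + i • h) (y + j • h)`
  have hc : c = c * cross x y + j * (c * cross x h) - i * (c * cross y h) := by
    simp only [Prod.ext_iff, Prod.fst_add, Prod.snd_add, Prod.smul_fst, Prod.smul_snd,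
      smul_eq_mul] at hx₁ hy₁
    simp only [cross]
    linear_combination (-c * (y.2 + j * h.2)) * hx₁.1 - c * hy₁.2 + c * (y.1 + j * h.1) * hx₁.2
  rw [hc]
  exact dvd_sub (dvd_add (hΛ x hx y hy) ((hh x hx).mul_left j)) ((hh y hy).mul_left i)

lemma cross_dvd_of_sup_zmultiples_eq_top
    (hgen : AddSubgroup.closure {r₁, r₂} ⊔ AddSubgroup.zmultiples h = ⊤) {n : ℤ}
    (hn : n • h ∈ AddSubgroup.closure {r₁, r₂}) : cross r₁ r₂ ∣ n :=
  dvd_of_sup_zmultiples_eq_top hgen (fun x hx y hy ↦ (cross_dvd_cross_of_mem hx hy).mul_left n)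
    fun x hx ↦ by simpa only [cross_smul_right] using cross_dvd_cross_of_mem hx hn

lemma gcd_eq_one_of_sup_zmultiples_eq_top
    (hgen : AddSubgroup.closure {r₁, r₂} ⊔ AddSubgroup.zmultiples h = ⊤) :
    Int.gcd (Int.gcd r₁.1 r₂.1) (Int.gcd r₁.2 r₂.2) = 1 := by
  set t : ℕ := Int.gcd (Int.gcd r₁.1 r₂.1) (Int.gcd r₁.2 r₂.2)
  have ht : ∀ x ∈ AddSubgroup.closure {r₁, r₂}, ∀ v, (t : ℤ) ∣ cross x v := by
    intro x hx v
    obtain ⟨i, j, rfl⟩ := AddSubgroup.mem_closure_pair.1 hx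
    have h₁ : (t : ℤ) ∣ i * r₁.1 + j * r₂.1 :=
      (Int.gcd_dvd_left _ _).trans (dvd_add ((Int.gcd_dvd_left _ _).mul_left i)
        ((Int.gcd_dvd_right _ _).mul_left j))
    have h₂ : (t : ℤ) ∣ i * r₁.2 + j * r₂.2 :=
      (Int.gcd_dvd_right _ _).trans (dvd_add ((Int.gcd_dvd_left _ _).mul_left i)
        ((Int.gcd_dvd_right _ _).mul_left j))
    simpa [cross] using dvd_sub (h₁.mul_right v.2) (h₂.mul_right v.1)
  have := dvd_of_sup_zmultiples_eq_top hgen (c := 1) (d := t)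
    (fun x hx y _ ↦ by simpa using ht x hx y) (fun x hx ↦ by simpa using ht x hx h)
  exact Nat.dvd_one.1 (Int.natCast_dvd_natCast.1 this)

lemma exists_gcd_add_mul_eq_one {a b A B : ℤ} (hD : a * B - b * A ≠ 0)
    (hgcd : Int.gcd (Int.gcd a A) (Int.gcd b B) = 1) :
    ∃ k : ℤ, Int.gcd (a + k * A) (b + k * B) = 1 := by
  classical
  -- A common prime factor of `a + k * A` and `b + k * B` divides `a * B - b * A`; among those
  -- primes, `k` is divisible exactly by the ones that do not divide both `a` and `b`.
  set k : ℕ := ∏ p ∈ (a * B - b * A).natAbs.primeFactors with ¬(((p : ℕ) : ℤ) ∣ a ∧ (p : ℤ) ∣ b), p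
  refine ⟨k, ?_⟩
  by_contra hne
  obtain ⟨p, hp, hpgcd⟩ := Nat.exists_prime_and_dvd hne
  have hpa : (p : ℤ) ∣ a + k * A := (Int.natCast_dvd_natCast.2 hpgcd).trans (Int.gcd_dvd_left _ _)
  have hpb : (p : ℤ) ∣ b + k * B :=
    (Int.natCast_dvd_natCast.2 hpgcd).trans (Int.gcd_dvd_right _ _)
  have hpD : (p : ℤ) ∣ a * B - b * A := by
    rw [show a * B - b * A = (a + k * A) * B - (b + k * B) * A by ring]
    exact dvd_sub (hpa.mul_right B) (hpb.mul_right A)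
  have hpk : p ∣ k ↔ ¬((p : ℤ) ∣ a ∧ (p : ℤ) ∣ b) := by
    rw [(Nat.prime_iff.1 hp).dvd_finsetProd_iff]
    constructor
    · rintro ⟨q, hq, hpq⟩
      rw [Finset.mem_filter, Nat.mem_primeFactors] at hq
      obtain rfl := (Nat.prime_dvd_prime_iff_eq hp hq.1.1).1 hpq
      exact hq.2
    · exact fun hab ↦ ⟨p, Finset.mem_filter.2
        ⟨Nat.mem_primeFactors.2 ⟨hp, Int.natCast_dvd.1 hpD, Int.natAbs_ne_zero.2 hD⟩, hab⟩, dvd_rfl⟩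
  by_cases hab : (p : ℤ) ∣ a ∧ (p : ℤ) ∣ b
  · have hk : ¬(p : ℤ) ∣ k := fun h ↦ hpk.1 (Int.natCast_dvd_natCast.1 h) hab
    have hpA := (Int.Prime.dvd_mul' hp ((dvd_add_right hab.1).1 hpa)).resolve_left hk
    have hpB := (Int.Prime.dvd_mul' hp ((dvd_add_right hab.2).1 hpb)).resolve_left hk
    have h1 : (p : ℤ) ∣ (Int.gcd (Int.gcd a A) (Int.gcd b B) : ℤ) :=
      Int.dvd_coe_gcd (Int.dvd_coe_gcd hab.1 hpA) (Int.dvd_coe_gcd hab.2 hpB)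
    rw [hgcd] at h1
    exact hp.one_lt.ne' (Nat.dvd_one.1 (Int.natCast_dvd_natCast.1 h1))
  · have hk : (p : ℤ) ∣ k := Int.natCast_dvd_natCast.2 (hpk.2 hab)
    exact hab ⟨(dvd_add_left (hk.mul_right A)).1 hpa, (dvd_add_left (hk.mul_right B)).1 hpb⟩

lemma exists_cross_eq_one {r : ℤ × ℤ} (hr : Int.gcd r.1 r.2 = 1) : ∃ h, cross r h = 1 :=
  ⟨(-Int.gcdB r.1 r.2, Int.gcdA r.1 r.2), by
    have := Int.gcd_eq_gcd_ab r.1 r.2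
    rw [hr] at this
    simp only [cross]
    linear_combination -this⟩

lemma sup_zmultiples_eq_top_of_cross_eq_one {r : ℤ × ℤ} (hr : r ∈ AddSubgroup.closure {r₁, r₂})
    (hrh : cross r h = 1) : AddSubgroup.closure {r₁, r₂} ⊔ AddSubgroup.zmultiples h = ⊤ := by
  refine (AddSubgroup.eq_top_iff' _).2 fun v ↦ AddSubgroup.mem_sup.2
    ⟨cross v h • r, AddSubgroup.zsmul_mem _ hr _, cross r v • h, ⟨cross r v, rfl⟩, ?_⟩
  simp only [cross] at hrh ⊢
  ext <;> simp only [Prod.fst_add, Prod.snd_add, Prod.smul_fst, Prod.smul_snd, smul_eq_mul]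
  · linear_combination v.1 * hrh
  · linear_combination v.2 * hrh

variable {τ : ℂ}

def coord (τ : ℂ) (v : ℤ × ℤ) : ℂ := v.1 + v.2 * τ

lemma coord_add (v w : ℤ × ℤ) : coord τ (v + w) = coord τ v + coord τ w := by
  simp only [coord, Prod.fst_add, Prod.snd_add]; push_cast; ring

lemma coord_zsmul (m : ℤ) (v : ℤ × ℤ) : coord τ (m • v) = m * coord τ v := by
  simp only [coord, Prod.smul_fst, Prod.smul_snd, smul_eq_mul]; push_cast; ring

lemma coord_injective (hτ : τ.im ≠ 0) : Function.Injective (coord τ) := by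
  intro v w hvw
  have him : (v.2 : ℝ) * τ.im = w.2 * τ.im := by simpa [coord] using congrArg Complex.im hvw
  have h₂ : v.2 = w.2 := by exact_mod_cast mul_right_cancel₀ hτ him
  have h₁ : v.1 = w.1 := by exact_mod_cast (by simpa [coord, h₂] using congrArg Complex.re hvw)
  exact Prod.ext h₁ h₂

lemma latt_eq_range_coord (τ : ℂ) : latt τ = Set.range (coord τ) := by
  ext z
  exact ⟨fun ⟨m, k, hz⟩ ↦ ⟨(m, k), hz.symm⟩, fun ⟨v, hv⟩ ↦ ⟨v.1, v.2, hv.symm⟩⟩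

lemma mem_lattAdj_iff {g z : ℂ} :
    z ∈ lattAdj τ g ↔ ∃ (v : ℤ × ℤ) (l : ℤ), coord τ v + l * g = z :=
  ⟨fun ⟨m, k, l, hz⟩ ↦ ⟨(m, k), l, hz.symm⟩, fun ⟨v, l, hv⟩ ↦ ⟨v.1, v.2, l, hv.symm⟩⟩

lemma im_conj_mul_coord (v w : ℤ × ℤ) :
    (starRingEnd ℂ (coord τ v) * coord τ w).im = cross v w * τ.im := by
  simp only [coord, cross, Complex.mul_im, Complex.conj_re, Complex.conj_im, Complex.add_re,
    Complex.add_im, Complex.mul_re, Complex.mul_im, Complex.intCast_re, Complex.intCast_im]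
  push_cast
  ring

lemma cross_pos (hτ : 0 < τ.im) (hμτ : coord τ r₁ * τ = coord τ r₂) (hμ : coord τ r₁ ≠ 0) :
    0 < cross r₁ r₂ := by
  have key := im_conj_mul_coord (τ := τ) r₁ r₂
  rw [← hμτ, ← mul_assoc, Complex.conj_mul', ← Complex.ofReal_pow, Complex.im_ofReal_mul] at key
  have : (0 : ℝ) < cross r₁ r₂ := by
    rw [← mul_lt_mul_iff_left₀ hτ, zero_mul, ← key]
    exact mul_pos (pow_pos (norm_pos_iff.2 hμ) 2) hτ
  exact_mod_cast this

section Multiplication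

variable {g : ℂ} (hμτ : coord τ r₁ * τ = coord τ r₂)
include hμτ

lemma coord_mul_coord (v : ℤ × ℤ) : coord τ r₁ * coord τ v = coord τ (v.1 • r₁ + v.2 • r₂) := by
  rw [coord_add, coord_zsmul, coord_zsmul, ← hμτ]
  simp only [coord]
  ring

lemma exists_coord_mul_coord_eq_iff (hτ : τ.im ≠ 0) (x : ℤ × ℤ) :
    (∃ w, coord τ r₁ * coord τ w = coord τ x) ↔ x ∈ AddSubgroup.closure {r₁, r₂} := by
  simp only [coord_mul_coord hμτ, (coord_injective hτ).eq_iff, AddSubgroup.mem_closure_pair]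
  exact ⟨fun ⟨w, hw⟩ ↦ ⟨w.1, w.2, hw⟩, fun ⟨i, j, hij⟩ ↦ ⟨(i, j), hij⟩⟩

variable (hg : coord τ r₁ * g = coord τ h)
include hg

lemma coord_mul_coord_add_mul (v : ℤ × ℤ) (l : ℤ) :
    coord τ r₁ * (coord τ v + l * g) = coord τ (v.1 • r₁ + v.2 • r₂ + l • h) := by
  rw [mul_add, coord_mul_coord hμτ, mul_left_comm, hg, coord_add _ (l • h), coord_zsmul]

lemma intCast_mul_mem_latt_iff (hτ : τ.im ≠ 0) (hμ : coord τ r₁ ≠ 0) (m : ℤ) :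
    (m : ℂ) * g ∈ latt τ ↔ m • h ∈ AddSubgroup.closure {r₁, r₂} := by
  have hmg : coord τ r₁ * (m * g) = coord τ (m • h) := by
    rw [mul_left_comm, hg, coord_zsmul]
  rw [← exists_coord_mul_coord_eq_iff hμτ hτ, latt_eq_range_coord, ← hmg]
  simp only [Set.mem_range, mul_right_inj' hμ]

lemma addOrderOf_mk_eq_iff (hτ : τ.im ≠ 0) (hμ : coord τ r₁ ≠ 0) {n : ℕ} (hn : 0 < n) :
    addOrderOf (h : (ℤ × ℤ) ⧸ AddSubgroup.closure {r₁, r₂}) = n ↔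
      ((n : ℂ) * g ∈ latt τ ∧ ∀ m : ℕ, 0 < m → m < n → (m : ℂ) * g ∉ latt τ) := by
  have hnat (m : ℕ) :
      m • (h : (ℤ × ℤ) ⧸ AddSubgroup.closure {r₁, r₂}) = 0 ↔ (m : ℂ) * g ∈ latt τ := by
    rw [← QuotientAddGroup.mk_nsmul, QuotientAddGroup.eq_zero_iff, ← natCast_zsmul,
      ← intCast_mul_mem_latt_iff hμτ hg hτ hμ, Int.cast_natCast]
  simp only [addOrderOf_eq_iff hn, ne_eq, hnat]
  exact and_congr_right fun _ ↦ ⟨fun H m hm hmn ↦ H m hmn hm, fun H m hmn hm ↦ H m hm hmn⟩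

lemma image_inv_mul_latt_eq_lattAdj_iff (hτ : τ.im ≠ 0) (hμ : coord τ r₁ ≠ 0) :
    (fun x ↦ (coord τ r₁)⁻¹ * x) '' latt τ = lattAdj τ g ↔
      AddSubgroup.closure {r₁, r₂} ⊔ AddSubgroup.zmultiples h = ⊤ := by
  constructor
  · intro hset
    refine (AddSubgroup.eq_top_iff' _).2 fun v ↦ ?_
    have hv : (coord τ r₁)⁻¹ * coord τ v ∈ lattAdj τ g :=
      hset ▸ ⟨coord τ v, latt_eq_range_coord τ ▸ ⟨v, rfl⟩, rfl⟩
    obtain ⟨u, l, hul⟩ := mem_lattAdj_iff.1 hv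
    have : coord τ (u.1 • r₁ + u.2 • r₂ + l • h) = coord τ v := by
      rw [← coord_mul_coord_add_mul hμτ hg, hul, mul_inv_cancel_left₀ hμ]
    rw [← coord_injective hτ this]
    exact AddSubgroup.add_mem_sup (AddSubgroup.mem_closure_pair.2 ⟨u.1, u.2, rfl⟩)
      (AddSubgroup.zsmul_mem_zmultiples h l)
  · intro htop
    ext z
    rw [mem_lattAdj_iff, latt_eq_range_coord]
    constructor
    · rintro ⟨_, ⟨v, rfl⟩, rfl⟩
      obtain ⟨x, hx, _, ⟨l, rfl⟩, rfl⟩ := AddSubgroup.mem_sup.1 (htop ▸ AddSubgroup.mem_top v)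
      obtain ⟨i, j, rfl⟩ := AddSubgroup.mem_closure_pair.1 hx
      refine ⟨(i, j), l, ?_⟩
      rw [eq_inv_mul_iff_mul_eq₀ hμ, coord_mul_coord_add_mul hμτ hg]
    · rintro ⟨u, l, rfl⟩
      refine ⟨_, ⟨u.1 • r₁ + u.2 • r₂ + l • h, rfl⟩, ?_⟩
      rw [← coord_mul_coord_add_mul hμτ hg u l]
      exact inv_mul_cancel_left₀ hμ _

end Multiplication

lemma exists_coord_of_image_mul_latt_eq_lattAdj {lam g : ℂ}
    (hset : (fun x ↦ lam * x) '' latt τ = lattAdj τ g) :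
    ∃ r₁ r₂ h : ℤ × ℤ, lam = (coord τ r₁)⁻¹ ∧ coord τ r₁ ≠ 0 ∧
      coord τ r₁ * τ = coord τ r₂ ∧ coord τ r₁ * g = coord τ h := by
  have hmem (z : ℂ) (hz : z ∈ lattAdj τ g) : ∃ v, lam * coord τ v = z := by
    rw [← hset, latt_eq_range_coord] at hz
    obtain ⟨_, ⟨v, rfl⟩, rfl⟩ := hz
    exact ⟨v, rfl⟩
  obtain ⟨r₁, hr₁⟩ := hmem 1 ⟨1, 0, 0, by simp⟩
  obtain ⟨r₂, hr₂⟩ := hmem τ ⟨0, 1, 0, by simp⟩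
  obtain ⟨h, hh⟩ := hmem g ⟨0, 0, 1, by simp⟩
  have hlam : lam = (coord τ r₁)⁻¹ := eq_inv_of_mul_eq_one_left hr₁
  have hμ : coord τ r₁ ≠ 0 := right_ne_zero_of_mul_eq_one hr₁
  rw [hlam] at hr₂ hh
  exact ⟨r₁, r₂, h, hlam, hμ, ((inv_mul_eq_iff_eq_mul₀ hμ).1 hr₂).symm,
    ((inv_mul_eq_iff_eq_mul₀ hμ).1 hh).symm⟩

lemma coord_ne_zero_of_cross_ne_zero (hτ : τ.im ≠ 0) (hD : cross r₁ r₂ ≠ 0) :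
    coord τ r₁ ≠ 0 := by
  intro h0
  obtain rfl : r₁ = 0 := coord_injective hτ (h0.trans (by simp [coord]))
  simp [cross] at hD

end CyclicSelfIsogeny

open CyclicSelfIsogeny

theorem stmt_1 (τ : ℂ) (hτ : 0 < τ.im) (n : ℕ) (hn : 1 ≤ n) :
    (∃ g lam : ℂ,
        ((n : ℂ) * g ∈ latt τ ∧ ∀ m : ℕ, 0 < m → m < n → (m : ℂ) * g ∉ latt τ) ∧
        (fun x => lam * x) '' latt τ = lattAdj τ g) ↔
    (∃ a b A B : ℤ, Int.gcd (Int.gcd a A) (Int.gcd b B) = 1 ∧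
        a * B - b * A = (n : ℤ) ∧
        ((a : ℂ) + (b : ℂ) * τ) * τ = (A : ℂ) + (B : ℂ) * τ) := by
  constructor
  · rintro ⟨g, lam, hord, hset⟩
    obtain ⟨r₁, r₂, h, rfl, hμ, hμτ, hg⟩ := exists_coord_of_image_mul_latt_eq_lattAdj hset
    rw [← addOrderOf_mk_eq_iff hμτ hg hτ.ne' hμ hn] at hord
    rw [image_inv_mul_latt_eq_lattAdj_iff hμτ hg hτ.ne' hμ] at hset
    have hnD : (n : ℤ) ∣ cross r₁ r₂ := hord ▸ addOrderOf_dvd_cross r₁ r₂ h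
    have hDn : cross r₁ r₂ ∣ n := by
      refine cross_dvd_of_sup_zmultiples_eq_top hset ?_
      rw [← QuotientAddGroup.eq_zero_iff, QuotientAddGroup.mk_zsmul, natCast_zsmul, ← hord]
      exact addOrderOf_nsmul_eq_zero _
    exact ⟨r₁.1, r₁.2, r₂.1, r₂.2, gcd_eq_one_of_sup_zmultiples_eq_top hset,
      Int.dvd_antisymm (cross_pos hτ hμτ hμ).le (Int.natCast_nonneg n) hDn hnD, hμτ⟩
  · rintro ⟨a, b, A, B, hgcd, hdet, hμτ⟩
    obtain ⟨k, hk⟩ := exists_gcd_add_mul_eq_one (by omega) hgcd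
    set r₁ : ℤ × ℤ := (a, b)
    set r₂ : ℤ × ℤ := (A, B)
    replace hμτ : coord τ r₁ * τ = coord τ r₂ := hμτ
    have hD : cross r₁ r₂ = n := hdet
    have hr : r₁ + k • r₂ ∈ AddSubgroup.closure {r₁, r₂} :=
      AddSubgroup.mem_closure_pair.2 ⟨1, k, by rw [one_smul]⟩
    obtain ⟨h, hrh⟩ := exists_cross_eq_one (r := r₁ + k • r₂) hk
    have hμ : coord τ r₁ ≠ 0 := coord_ne_zero_of_cross_ne_zero hτ.ne' (by rw [hD]; omega)
    have hg : coord τ r₁ * ((coord τ r₁)⁻¹ * coord τ h) = coord τ h := mul_inv_cancel_left₀ hμ _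
    refine ⟨_, _, (addOrderOf_mk_eq_iff hμτ hg hτ.ne' hμ hn).1 ?_,
      (image_inv_mul_latt_eq_lattAdj_iff hμτ hg hτ.ne' hμ).2
        (sup_zmultiples_eq_top_of_cross_eq_one hr hrh)⟩
    rw [addOrderOf_mk_eq_natAbs_cross hr hrh, hD, Int.natAbs_natCast]
end
end

section
/- Let u, v ∈ ℚ with Δ = u² + 4v < 0, written u = u₁/u₂ and v = v₁/v₂ in lowest terms with u₂, v₂ > 0, and let d = gcd(u₂, v₂). Let τ ∈ ℂ with Im τ > 0 satisfy τ² = u·τ + v, let L_τ = {m + k·τ : m, k ∈ ℤ}, and let n ≥ 1 be an integer. Then there exist g ∈ ℂ and λ ∈ ℂ such that the coset g + L_τ has order exactly n in ℂ/L_τ and λ·L_τ = L_τ + ℤ·g, if and only if there exist integers a, b' with gcd(a, b') = 1 and n = a·(a + (u₁v₂/d)·b') − ((u₂v₂/d)·b')·((u₂v₁/d)·b'). -/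
noncomputable section

/-
If `λ L_τ = L_τ + ℤg`, then `ν = λ⁻¹` lies in `L_τ` and `ν L_τ ⊆ L_τ`, so `ν` lies in the
multiplier ring `ℤ[Cτ]`, where `C = u₂ v₂ / d = lcm(u₂, v₂)` is the least positive integer with
`Cu, Cv ∈ ℤ`; write `ν = a + bCτ`. The condition on `g` says that `L_τ / ν L_τ` is cyclic of
order `n`. In the basis `1, τ`, multiplication by `ν` is an integer matrix `M` with
`det M = a(a + Pb) - (Cb)(Qb)` (`P = Cu`, `Q = Cv`), the norm of `ν`, positive since `Δ < 0`;
and `ℤ² / Mℤ²` has order `det M`. A finite abelian group is cyclic iff its exponent is its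
order, and via `M * adj M = det M • 1` the exponent of `ℤ² / Mℤ²` is `det M` iff the entries of
`adj M`, which are `±` those of `M`, are coprime. As `gcd(P, Q, C) = 1`, the entries
`a, Qb, Cb, a + Pb` are coprime iff `gcd(a, b) = 1`.
-/

theorem exists_addOrderOf_eq_and_forall_mem_zmultiples_iff {G : Type*} [AddGroup G] {n : ℕ} :
    (∃ x : G, addOrderOf x = n ∧ ∀ y, y ∈ AddSubgroup.zmultiples x) ↔
      IsAddCyclic G ∧ Nat.card G = n := by
  constructor
  · rintro ⟨x, hx, hgen⟩
    exact ⟨⟨x, hgen⟩, (addOrderOf_eq_card_of_forall_mem_zmultiples hgen).symm.trans hx⟩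
  · rintro ⟨_, hn⟩
    obtain ⟨x, hgen⟩ := IsAddCyclic.exists_generator (α := G)
    exact ⟨x, (addOrderOf_eq_card_of_forall_mem_zmultiples hgen).trans hn, hgen⟩

namespace Matrix

variable {ι : Type*} [Fintype ι]

abbrev coker (M : Matrix ι ι ℤ) : Type _ := (ι → ℤ) ⧸ LinearMap.range M.mulVecLin

variable {M : Matrix ι ι ℤ}

theorem coker_mk_eq_zero_iff {z : ι → ℤ} :
    (Submodule.Quotient.mk z : M.coker) = 0 ↔ ∃ y, M *ᵥ y = z := by
  simp [Submodule.Quotient.mk_eq_zero]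

variable [DecidableEq ι]

theorem natCard_coker (hM : M.det ≠ 0) : Nat.card M.coker = M.det.natAbs := by
  let e := LinearEquiv.ofInjective M.mulVecLin (mulVec_injective_of_det_ne_zero hM)
  rw [← Submodule.natAbs_det_equiv _ e, ← LinearMap.det_toLin' M, toLin'_apply']
  rfl

theorem exists_mul_eq_smul_one_iff (e : ℤ) :
    (∃ X, M * X = e • 1) ↔ ∀ x : M.coker, e • x = 0 := by
  constructor
  · rintro ⟨X, hX⟩ x
    induction x using Submodule.Quotient.induction_on with | _ z => ?_
    rw [← Submodule.Quotient.mk_smul, coker_mk_eq_zero_iff]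
    exact ⟨X *ᵥ z, by rw [mulVec_mulVec, hX, smul_mulVec, one_mulVec]⟩
  · intro h
    choose y hy using fun j => coker_mk_eq_zero_iff.1 (h (Submodule.Quotient.mk (Pi.single j 1)))
    refine ⟨of fun i j => y j i, ext fun i j => ?_⟩
    have hyij := congrFun (hy j) i
    simp only [mulVec, dotProduct, Pi.smul_apply, smul_eq_mul] at hyij
    simp [mul_apply, hyij, Pi.single_apply, one_apply]

theorem exponent_coker_dvd_iff (e : ℤ) :
    (AddMonoid.exponent M.coker : ℤ) ∣ e ↔ ∃ X, M * X = e • 1 := by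
  rw [exists_mul_eq_smul_one_iff, ← Int.dvd_natAbs, Int.natCast_dvd_natCast,
    AddMonoid.exponent_dvd_iff_forall_nsmul_eq_zero]
  simp only [natAbs_nsmul_eq_zero]

theorem exists_mul_eq_smul_one_of_dvd_adjugate [Nonempty ι] (hM : M.det ≠ 0) {r : ℤ}
    (hr : ∀ i j, r ∣ M.adjugate i j) :
    ∃ (e : ℤ) (X : Matrix ι ι ℤ), M.det = r * e ∧ M * X = e • 1 := by
  choose A hA using hr
  obtain ⟨i₀⟩ := ‹Nonempty ι›
  have hrA : r • (M * of A) = M.det • 1 := by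
    rw [← Matrix.mul_smul, ← mul_adjugate]
    congr
    ext i j
    exact (hA i j).symm
  have hdet : M.det = r * (M * of A) i₀ i₀ := by
    simpa using (congrFun (congrFun hrA i₀) i₀).symm
  have hr0 : r ≠ 0 := fun h => hM (by rw [hdet, h, zero_mul])
  refine ⟨_, of A, hdet, smul_right_injective _ hr0 ?_⟩
  simp only [hrA, smul_smul, ← hdet]

theorem adjugate_eq_smul_of_mul_eq_smul_one {e f : ℤ} {X : Matrix ι ι ℤ} (he : e ≠ 0)
    (hX : M * X = e • 1) (hdet : M.det = e * f) : M.adjugate = f • X := by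
  have h := congrArg (M.adjugate * ·) hX
  simp only [← Matrix.mul_assoc, adjugate_mul, hdet, Matrix.mul_smul, Matrix.mul_one, smul_mul,
    one_mul, mul_smul] at h
  exact smul_right_injective _ he h.symm

theorem isAddCyclic_coker_iff [Nonempty ι] (hM : M.det ≠ 0) :
    IsAddCyclic M.coker ↔ ∀ r : ℤ, (∀ i j, r ∣ M.adjugate i j) → IsUnit r := by
  have hcard := natCard_coker hM
  have : Finite M.coker := Nat.finite_of_card_ne_zero (by rw [hcard]; exact Int.natAbs_ne_zero.2 hM)
  rw [IsAddCyclic.iff_exponent_eq_card, hcard]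
  constructor
  · intro hexp r hr
    obtain ⟨e, X, hdet, hX⟩ := exists_mul_eq_smul_one_of_dvd_adjugate hM hr
    have he : e ≠ 0 := fun h => hM (by rw [hdet, h, mul_zero])
    have hdvd := (exponent_coker_dvd_iff e).2 ⟨X, hX⟩
    rw [hexp, Int.natAbs_dvd, hdet] at hdvd
    exact isUnit_of_dvd_one ((mul_dvd_mul_iff_right he).1 (by rwa [one_mul]))
  · intro hprim
    set E := AddMonoid.exponent M.coker
    obtain ⟨X, hX⟩ := (exponent_coker_dvd_iff (E : ℤ)).1 dvd_rfl
    obtain ⟨f, hf⟩ : (E : ℤ) ∣ M.det := by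
      rw [← Int.dvd_natAbs, Int.natCast_dvd_natCast, ← hcard]
      exact AddGroup.exponent_dvd_nat_card
    have hE : (E : ℤ) ≠ 0 := by exact_mod_cast AddMonoid.exponent_ne_zero_of_finite
    have hadj := adjugate_eq_smul_of_mul_eq_smul_one hE hX hf
    have hf1 := hprim f fun i j => by rw [hadj]; exact ⟨X i j, rfl⟩
    rw [hf, Int.natAbs_mul, Int.isUnit_iff_natAbs_eq.1 hf1, mul_one, Int.natAbs_natCast]

theorem dvd_adjugate_fin_two_iff {R : Type*} [CommRing R] (A : Matrix (Fin 2) (Fin 2) R) (r : R) :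
    (∀ i j, r ∣ A.adjugate i j) ↔ ∀ i j, r ∣ A i j := by
  simp only [adjugate_fin_two, Fin.forall_fin_two, of_apply, cons_val', cons_val_zero,
    cons_val_one, empty_val', cons_val_fin_one, dvd_neg]
  tauto

theorem exists_addOrderOf_coker_iff (A : Matrix (Fin 2) (Fin 2) ℤ) (hA : A.det ≠ 0) (n : ℕ) :
    (∃ x : A.coker, addOrderOf x = n ∧ ∀ y, y ∈ AddSubgroup.zmultiples x) ↔
      A.det.natAbs = n ∧ ∀ r : ℤ, (∀ i j, r ∣ A i j) → IsUnit r := by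
  rw [exists_addOrderOf_eq_and_forall_mem_zmultiples_iff, isAddCyclic_coker_iff hA,
    natCard_coker hA]
  simp only [dvd_adjugate_fin_two_iff]
  exact and_comm

end Matrix

open Matrix

section Lattice

variable {τ : ℂ}

def latticeHom (τ : ℂ) : (Fin 2 → ℤ) →+ ℂ where
  toFun z := z 0 + z 1 * τ
  map_zero' := by simp
  map_add' _ _ := by simp only [Pi.add_apply]; push_cast; ring

theorem latticeHom_apply (z : Fin 2 → ℤ) : latticeHom τ z = z 0 + z 1 * τ := rfl

theorem range_latticeHom : Set.range (latticeHom τ) = latt τ := by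
  ext z
  constructor
  · rintro ⟨y, rfl⟩
    exact ⟨y 0, y 1, rfl⟩
  · rintro ⟨m, k, rfl⟩
    exact ⟨![m, k], by simp [latticeHom_apply]⟩

theorem mem_lattAdj_iff {g z : ℂ} :
    z ∈ lattAdj τ g ↔ ∃ (y : Fin 2 → ℤ) (l : ℤ), latticeHom τ y + l * g = z := by
  constructor
  · rintro ⟨m, k, l, rfl⟩
    exact ⟨![m, k], l, by simp [latticeHom_apply]⟩
  · rintro ⟨y, l, rfl⟩
    exact ⟨y 0, y 1, l, rfl⟩

theorem eq_zero_of_ratCast_add_mul_eq_zero (hτ : τ.im ≠ 0) {r s : ℚ}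
    (h : (r : ℂ) + s * τ = 0) : r = 0 ∧ s = 0 := by
  have hs : s = 0 := by simpa [hτ] using congrArg Complex.im h
  subst hs
  simpa using h

theorem latticeHom_injective (hτ : τ.im ≠ 0) : Function.Injective (latticeHom τ) := by
  refine (injective_iff_map_eq_zero _).2 fun y hy => ?_
  have h := eq_zero_of_ratCast_add_mul_eq_zero hτ (r := y 0) (s := y 1) (by exact_mod_cast hy)
  ext i
  fin_cases i
  · exact_mod_cast h.1
  · exact_mod_cast h.2

theorem exists_of_image_eq_lattAdj {lam g : ℂ} (h : (fun x => lam * x) '' latt τ = lattAdj τ g) :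
    ∃ ν ∈ latt τ, ν * τ ∈ latt τ ∧ ν ≠ 0 ∧ lam = ν⁻¹ ∧ ∃ w, g = ν⁻¹ * latticeHom τ w := by
  have h1 : (1 : ℂ) ∈ lattAdj τ g := ⟨1, 0, 0, by simp⟩
  have hτ : τ ∈ lattAdj τ g := ⟨0, 1, 0, by simp⟩
  have hg : g ∈ lattAdj τ g := ⟨0, 0, 1, by simp⟩
  rw [← h] at h1 hτ hg
  obtain ⟨ν, hν, hν1⟩ := h1
  have hν0 : ν ≠ 0 := right_ne_zero_of_mul_eq_one hν1
  obtain rfl := eq_inv_of_mul_eq_one_left hν1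
  obtain ⟨x, hx, hxτ⟩ := hτ
  obtain ⟨y, hy, rfl⟩ := hg
  obtain ⟨w, rfl⟩ := range_latticeHom.symm ▸ hy
  have hx' : x = ν * τ := by rw [← hxτ, mul_inv_cancel_left₀ hν0]
  exact ⟨ν, hν, hx' ▸ hx, hν0, rfl, w, rfl⟩

section Multiplier

variable {ν : ℂ} {M : Matrix (Fin 2) (Fin 2) ℤ}

theorem natCast_mul_mem_latt_iff (hτ : τ.im ≠ 0) (hν0 : ν ≠ 0)
    (hν : ∀ y, ν * latticeHom τ y = latticeHom τ (M *ᵥ y)) (m : ℕ) (w : Fin 2 → ℤ) :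
    (m : ℂ) * (ν⁻¹ * latticeHom τ w) ∈ latt τ ↔ m • (Submodule.Quotient.mk w : M.coker) = 0 := by
  rw [← Submodule.Quotient.mk_smul, coker_mk_eq_zero_iff, ← range_latticeHom]
  refine exists_congr fun y => ?_
  rw [← (latticeHom_injective hτ).eq_iff, ← hν, map_nsmul, nsmul_eq_mul, mul_left_comm,
    eq_inv_mul_iff_mul_eq₀ hν0]

theorem image_eq_lattAdj_iff (hτ : τ.im ≠ 0) (hν0 : ν ≠ 0)
    (hν : ∀ y, ν * latticeHom τ y = latticeHom τ (M *ᵥ y)) (w : Fin 2 → ℤ) :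
    (fun x => ν⁻¹ * x) '' latt τ = lattAdj τ (ν⁻¹ * latticeHom τ w) ↔
      ∀ x : M.coker, x ∈ AddSubgroup.zmultiples (Submodule.Quotient.mk w) := by
  have hmk : ∀ (y : Fin 2 → ℤ) (l : ℤ),
      latticeHom τ y + l * (ν⁻¹ * latticeHom τ w) = ν⁻¹ * latticeHom τ (M *ᵥ y + l • w) := by
    intro y l
    rw [map_add, ← hν, map_zsmul, zsmul_eq_mul]
    field_simp
  have hsup : lattAdj τ (ν⁻¹ * latticeHom τ w) ⊆ (fun x => ν⁻¹ * x) '' latt τ := by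
    intro z hz
    obtain ⟨y, l, rfl⟩ := mem_lattAdj_iff.1 hz
    exact ⟨_, range_latticeHom ▸ Set.mem_range_self _, (hmk y l).symm⟩
  rw [Set.Subset.antisymm_iff, and_iff_left hsup, ← range_latticeHom, ← Set.range_comp,
    Set.range_subset_iff, (Submodule.Quotient.mk_surjective _).forall]
  refine forall_congr' fun z => ?_
  rw [mem_lattAdj_iff, AddSubgroup.mem_zmultiples_iff, exists_comm]
  refine exists_congr fun l => ?_
  rw [← Submodule.Quotient.mk_smul, eq_comm, ← sub_eq_zero, ← Submodule.Quotient.mk_sub,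
    coker_mk_eq_zero_iff]
  refine exists_congr fun y => ?_
  rw [Function.comp_apply, hmk, (mul_right_injective₀ (inv_ne_zero hν0)).eq_iff,
    (latticeHom_injective hτ).eq_iff, eq_sub_iff_add_eq]

theorem addOrderOf_mk_eq_iff (hτ : τ.im ≠ 0) (hν0 : ν ≠ 0)
    (hν : ∀ y, ν * latticeHom τ y = latticeHom τ (M *ᵥ y)) {n : ℕ} (hn : 0 < n) (w : Fin 2 → ℤ) :
    ((n : ℂ) * (ν⁻¹ * latticeHom τ w) ∈ latt τ ∧
        ∀ m : ℕ, 0 < m → m < n → (m : ℂ) * (ν⁻¹ * latticeHom τ w) ∉ latt τ) ↔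
      addOrderOf (Submodule.Quotient.mk w : M.coker) = n := by
  simp only [addOrderOf_eq_iff hn, natCast_mul_mem_latt_iff hτ hν0 hν]
  exact and_congr_right' ⟨fun h m hm h0 => h m h0 hm, fun h m h0 hm => h m hm h0⟩

theorem exists_image_eq_lattAdj_iff (hτ : τ.im ≠ 0) (hν0 : ν ≠ 0)
    (hν : ∀ y, ν * latticeHom τ y = latticeHom τ (M *ᵥ y)) {n : ℕ} (hn : 0 < n) :
    (∃ w : Fin 2 → ℤ, ((n : ℂ) * (ν⁻¹ * latticeHom τ w) ∈ latt τ ∧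
        ∀ m : ℕ, 0 < m → m < n → (m : ℂ) * (ν⁻¹ * latticeHom τ w) ∉ latt τ) ∧
        (fun x => ν⁻¹ * x) '' latt τ = lattAdj τ (ν⁻¹ * latticeHom τ w)) ↔
      ∃ x : M.coker, addOrderOf x = n ∧ ∀ y, y ∈ AddSubgroup.zmultiples x := by
  simp only [addOrderOf_mk_eq_iff hτ hν0 hν hn, image_eq_lattAdj_iff hτ hν0 hν,
    (Submodule.Quotient.mk_surjective _).exists]

end Multiplier

end Lattice

section Quadratic

variable {τ : ℂ} {u v : ℚ} {P Q C : ℤ}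

/-- For `Cτ² = Pτ + Q`, the matrix of multiplication by `a + bCτ` on `ℤ + ℤτ` in the basis
`1, τ`. -/
def mulMatrix (P Q C a b : ℤ) : Matrix (Fin 2) (Fin 2) ℤ := !![a, Q * b; C * b, a + P * b]

theorem det_mulMatrix (a b : ℤ) :
    (mulMatrix P Q C a b).det = a * (a + P * b) - C * b * (Q * b) := by
  rw [mulMatrix, det_fin_two_of]
  ring

theorem mul_latticeHom (hquad : τ ^ 2 = u * τ + v) (hCu : (C * u : ℚ) = P)
    (hCv : (C * v : ℚ) = Q) (a b : ℤ) (y : Fin 2 → ℤ) :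
    (a + (C * b : ℤ) * τ) * latticeHom τ y = latticeHom τ (mulMatrix P Q C a b *ᵥ y) := by
  have hCu' : (C * u : ℂ) = P := by exact_mod_cast hCu
  have hCv' : (C * v : ℂ) = Q := by exact_mod_cast hCv
  simp only [latticeHom_apply, mulMatrix, cons_mulVec, dotProduct, Fin.sum_univ_two,
    cons_val_zero, cons_val_one, cons_val_fin_one, empty_mulVec, Int.cast_add, Int.cast_mul]
  linear_combination (C * b * y 1 : ℂ) * hquad + (b * y 1 * τ) * hCu' + (b * y 1 : ℂ) * hCv'

theorem det_mulMatrix_pos (hΔ : u ^ 2 + 4 * v < 0) (hCu : (C * u : ℚ) = P)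
    (hCv : (C * v : ℚ) = Q) {a b : ℤ} (hab : a ≠ 0 ∨ C * b ≠ 0) :
    0 < (mulMatrix P Q C a b).det := by
  have key : ((mulMatrix P Q C a b).det : ℚ) * 4
      = (2 * a + (C * b : ℤ) * u) ^ 2 - ((C * b : ℤ) : ℚ) ^ 2 * (u ^ 2 + 4 * v) := by
    rw [det_mulMatrix]
    push_cast
    linear_combination (-4 * a * b : ℚ) * hCu + (4 * C * b ^ 2 : ℚ) * hCv
  have : (0 : ℚ) < (mulMatrix P Q C a b).det := by
    rcases eq_or_ne (C * b) 0 with hc | hc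
    · have ha : (a : ℚ) ≠ 0 := by exact_mod_cast hab.resolve_right (not_not.2 hc)
      have : (0 : ℚ) < a ^ 2 := by positivity
      rw [hc, Int.cast_zero] at key
      nlinarith
    · have : (0 : ℚ) < ((C * b : ℤ) : ℚ) ^ 2 := by positivity
      nlinarith [sq_nonneg (2 * a + (C * b : ℤ) * u)]
  exact_mod_cast this

theorem mulMatrix_primitive_iff (hPQC : ∀ r, r ∣ P → r ∣ Q → r ∣ C → IsUnit r) (a b : ℤ) :
    (∀ r, (∀ i j, r ∣ mulMatrix P Q C a b i j) → IsUnit r) ↔ Int.gcd a b = 1 := by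
  simp only [mulMatrix, Fin.forall_fin_two, of_apply, cons_val', cons_val_zero, cons_val_one,
    empty_val', cons_val_fin_one]
  constructor
  · intro h
    have hga := Int.gcd_dvd_left a b
    have hgb := Int.gcd_dvd_right a b
    have hunit := h _ ⟨⟨hga, hgb.mul_left Q⟩, hgb.mul_left C, dvd_add hga (hgb.mul_left P)⟩
    simpa using Int.isUnit_iff_natAbs_eq.1 hunit
  · rintro hab r ⟨⟨hra, hrQ⟩, hrC, hrP⟩
    have hrb : IsCoprime r b := (Int.isCoprime_iff_gcd_eq_one.2 hab).of_isCoprime_of_dvd_left hra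
    exact hPQC r (hrb.dvd_of_dvd_mul_right ((dvd_add_right hra).1 hrP))
      (hrb.dvd_of_dvd_mul_right hrQ) (hrb.dvd_of_dvd_mul_right hrC)

theorem exists_eq_add_mul_of_mul_mem_latt (hτ : τ.im ≠ 0) (hquad : τ ^ 2 = u * τ + v)
    (hC : ∀ s : ℤ, (∃ x : ℤ, s * u = x) → (∃ y : ℤ, s * v = y) → C ∣ s) {ν : ℂ}
    (hν : ν ∈ latt τ) (hντ : ν * τ ∈ latt τ) : ∃ a b : ℤ, ν = a + (C * b : ℤ) * τ := by
  obtain ⟨m, k, rfl⟩ := hν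
  obtain ⟨m', k', h⟩ := hντ
  have hcoord := eq_zero_of_ratCast_add_mul_eq_zero hτ (r := k * v - m') (s := m + k * u - k') (by
    push_cast
    linear_combination h - (k : ℂ) * hquad)
  obtain ⟨b, rfl⟩ := hC k ⟨k' - m, by push_cast; linarith [hcoord.2]⟩ ⟨m', by linarith [hcoord.1]⟩
  exact ⟨m, b, rfl⟩

theorem isUnit_of_dvd_of_dvd_of_dvd (hC0 : C ≠ 0) (hCu : (C * u : ℚ) = P) (hCv : (C * v : ℚ) = Q)
    (hC : ∀ s : ℤ, (∃ x : ℤ, s * u = x) → (∃ y : ℤ, s * v = y) → C ∣ s) (r : ℤ) :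
    r ∣ P → r ∣ Q → r ∣ C → IsUnit r := by
  rintro ⟨p, rfl⟩ ⟨q, rfl⟩ ⟨c, rfl⟩
  have hr : (r : ℚ) ≠ 0 := by exact_mod_cast left_ne_zero_of_mul hC0
  have hc : c ≠ 0 := right_ne_zero_of_mul hC0
  obtain ⟨k, hk⟩ := hC c ⟨p, mul_left_cancel₀ hr (by push_cast at hCu; linear_combination hCu)⟩
    ⟨q, mul_left_cancel₀ hr (by push_cast at hCv; linear_combination hCv)⟩
  exact IsUnit.of_mul_eq_one k (mul_left_cancel₀ hc (by linear_combination -hk))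

theorem exists_order_and_image_eq_lattAdj_iff (hτ : τ.im ≠ 0) (hquad : τ ^ 2 = u * τ + v)
    (hΔ : u ^ 2 + 4 * v < 0) (hC0 : C ≠ 0) (hCu : (C * u : ℚ) = P) (hCv : (C * v : ℚ) = Q)
    (hC : ∀ s : ℤ, (∃ x : ℤ, s * u = x) → (∃ y : ℤ, s * v = y) → C ∣ s) {n : ℕ} (hn : 0 < n) :
    (∃ g lam : ℂ, ((n : ℂ) * g ∈ latt τ ∧ ∀ m : ℕ, 0 < m → m < n → (m : ℂ) * g ∉ latt τ) ∧
        (fun x => lam * x) '' latt τ = lattAdj τ g) ↔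
      ∃ a b : ℤ, Int.gcd a b = 1 ∧ (n : ℤ) = a * (a + P * b) - C * b * (Q * b) := by
  have hprim := mulMatrix_primitive_iff (isUnit_of_dvd_of_dvd_of_dvd hC0 hCu hCv hC)
  constructor
  · rintro ⟨g, lam, hord, himg⟩
    obtain ⟨ν, hνL, hντ, hν0, rfl, w, rfl⟩ := exists_of_image_eq_lattAdj himg
    obtain ⟨a, b, rfl⟩ := exists_eq_add_mul_of_mul_mem_latt hτ hquad hC hνL hντ
    have hdet := det_mulMatrix_pos hΔ hCu hCv (a := a) (b := b) (by
      by_contra! h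
      simp [h] at hν0)
    obtain ⟨habs, hab⟩ := (exists_addOrderOf_coker_iff _ hdet.ne' n).1
      ((exists_image_eq_lattAdj_iff hτ hν0 (mul_latticeHom hquad hCu hCv a b) hn).1
        ⟨w, hord, himg⟩)
    refine ⟨a, b, (hprim a b).1 hab, ?_⟩
    rw [← det_mulMatrix]
    omega
  · rintro ⟨a, b, hab, hdet⟩
    rw [← det_mulMatrix] at hdet
    have hν0 : (a + (C * b : ℤ) * τ : ℂ) ≠ 0 := by
      intro h
      obtain ⟨ha, hb⟩ := eq_zero_of_ratCast_add_mul_eq_zero hτ (r := a) (s := C * b) (by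
        exact_mod_cast h)
      rw [det_mulMatrix, show a = 0 by exact_mod_cast ha, show C * b = 0 by exact_mod_cast hb]
        at hdet
      omega
    obtain ⟨w, hw⟩ := (exists_image_eq_lattAdj_iff hτ hν0 (mul_latticeHom hquad hCu hCv a b) hn).2
      ((exists_addOrderOf_coker_iff _ (by omega) n).2 ⟨by omega, (hprim a b).2 hab⟩)
    exact ⟨_, _, hw⟩

end Quadratic

theorem intCast_mul_ediv_mul_div {m n k d : ℤ} (hd : d ∣ n) (hm : m ≠ 0) :
    ((m * n / d : ℤ) : ℚ) * (k / m) = ((k * n / d : ℤ) : ℚ) := by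
  rcases eq_or_ne d 0 with rfl | hd0
  · simp
  rw [Int.cast_div (hd.mul_left _) (by exact_mod_cast hd0),
    Int.cast_div (hd.mul_left _) (by exact_mod_cast hd0)]
  push_cast
  field_simp

theorem dvd_of_intCast_mul_div_eq {m n s x : ℤ} (hmn : Int.gcd m n = 1) (hn : n ≠ 0)
    (h : (s : ℚ) * (m / n) = x) : n ∣ s := by
  have h' : s * m = n * x := by
    field_simp at h
    exact_mod_cast (by linarith : (s : ℚ) * m = n * x)
  exact (Int.isCoprime_iff_gcd_eq_one.2 hmn).symm.dvd_of_dvd_mul_right ⟨x, h'⟩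

theorem mul_ediv_gcd_dvd {m n s : ℤ} (hm : 0 < m) (hn : 0 < n) (hms : m ∣ s) (hns : n ∣ s) :
    m * n / Int.gcd m n ∣ s := by
  have hg : (Int.gcd m n : ℤ) ≠ 0 := by exact_mod_cast (Int.gcd_pos_of_ne_zero_left n hm.ne').ne'
  have hlcm : (Int.lcm m n : ℤ) = m * n / Int.gcd m n := by
    refine Int.eq_ediv_of_mul_eq_right hg ?_
    rw [← Int.natAbs_of_nonneg hm.le, ← Int.natAbs_of_nonneg hn.le]
    exact_mod_cast Int.gcd_mul_lcm m n
  rw [← hlcm, Int.coe_lcm]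
  exact lcm_dvd hms hns

theorem stmt_3 (u v : ℚ) (u₁ u₂ v₁ v₂ : ℤ) (hu₂ : 0 < u₂) (hv₂ : 0 < v₂)
    (hu : u = (u₁ : ℚ) / (u₂ : ℚ)) (hv : v = (v₁ : ℚ) / (v₂ : ℚ))
    (hcu : Int.gcd u₁ u₂ = 1) (hcv : Int.gcd v₁ v₂ = 1)
    (d : ℤ) (hd : d = Int.gcd u₂ v₂)
    (hΔ : u ^ 2 + 4 * v < 0)
    (τ : ℂ) (hτ : 0 < τ.im) (hquad : τ ^ 2 = (u : ℂ) * τ + (v : ℂ))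
    (n : ℕ) (hn : 1 ≤ n) :
    (∃ g lam : ℂ,
        ((n : ℂ) * g ∈ latt τ ∧ ∀ m : ℕ, 0 < m → m < n → (m : ℂ) * g ∉ latt τ) ∧
        (fun x => lam * x) '' latt τ = lattAdj τ g) ↔
    (∃ a b' : ℤ, Int.gcd a b' = 1 ∧
        (n : ℤ) = a * (a + u₁ * v₂ / d * b') -
          (u₂ * v₂ / d * b') * (u₂ * v₁ / d * b')) := by
  have hdu : d ∣ u₂ := hd ▸ Int.gcd_dvd_left ..
  have hdv : d ∣ v₂ := hd ▸ Int.gcd_dvd_right ..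
  have hCu : ((u₂ * v₂ / d : ℤ) * u : ℚ) = (u₁ * v₂ / d : ℤ) :=
    hu ▸ intCast_mul_ediv_mul_div hdv hu₂.ne'
  have hCv : ((u₂ * v₂ / d : ℤ) * v : ℚ) = (u₂ * v₁ / d : ℤ) := by
    rw [mul_comm u₂ v₂, mul_comm u₂ v₁, hv]
    exact intCast_mul_ediv_mul_div hdu hv₂.ne'
  have hC : ∀ s : ℤ, (∃ x : ℤ, s * u = x) → (∃ y : ℤ, s * v = y) → u₂ * v₂ / d ∣ s := by
    rintro s ⟨x, hx⟩ ⟨y, hy⟩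
    exact hd ▸ mul_ediv_gcd_dvd hu₂ hv₂ (dvd_of_intCast_mul_div_eq hcu hu₂.ne' (hu ▸ hx))
      (dvd_of_intCast_mul_div_eq hcv hv₂.ne' (hv ▸ hy))
  have hC0 : 0 < u₂ * v₂ / d :=
    Int.ediv_pos_of_pos_of_dvd (mul_pos hu₂ hv₂) (hd ▸ Int.natCast_nonneg _) (hdv.mul_left _)
  exact exists_order_and_image_eq_lattAdj_iff hτ.ne' hquad hΔ hC0.ne' hCu hCv hC hn
end
end

section
/- Let u, v ∈ ℚ, written u = u₁/u₂ and v = v₁/v₂ in lowest terms with u₂, v₂ > 0, and let d = gcd(u₂, v₂). Let τ ∈ ℂ be a non-real complex number with τ² = u·τ + v, and let a, b, A, B be integers satisfying (a + b·τ)·τ = A + B·τ. Then there exists an integer b' such that b = (u₂v₂/d)·b', A = (u₂v₁/d)·b', and B = a + (u₁v₂/d)·b'. -/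
/-!
Since `τ` is not real, `1` and `τ` are linearly independent over `ℝ`, so substituting
`τ² = uτ + v` into `(a + bτ)τ = A + Bτ` gives `A = b v` and `B = a + b u`. These are integers,
so by coprimality `v₂ ∣ b` and `u₂ ∣ b`, hence `b` is a multiple `lcm(u₂, v₂) b'` with
`lcm(u₂, v₂) = u₂ v₂ / d`, and the three formulas follow.
-/

namespace Complex

theorem eq_zero_of_ofReal_add_mul_eq_zero {τ : ℂ} (hτ : τ.im ≠ 0) {x y : ℝ}
    (h : (x : ℂ) + y * τ = 0) : x = 0 ∧ y = 0 := by
  have hy : y = 0 := by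
    simpa [hτ] using congrArg im h
  subst hy
  simpa using h

theorem coeff_eq_of_mul_eq_of_sq_eq {τ : ℂ} (hτ : τ.im ≠ 0) {u v a b A B : ℝ}
    (hquad : τ ^ 2 = u * τ + v) (h : ((a : ℂ) + b * τ) * τ = A + B * τ) :
    A = b * v ∧ B = a + b * u := by
  have hlin : ((b * v - A : ℝ) : ℂ) + ((a + b * u - B : ℝ) : ℂ) * τ = 0 := by
    push_cast
    linear_combination h - (b : ℂ) * hquad
  obtain ⟨h₀, h₁⟩ := eq_zero_of_ofReal_add_mul_eq_zero hτ hlin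
  constructor <;> linarith

end Complex

namespace Int

theorem mul_eq_mul_of_cast_eq_mul_div {m n p q : ℤ} (hq : q ≠ 0) (h : (m : ℚ) = n * (p / q)) :
    m * q = n * p := by
  rw [← mul_div_assoc, eq_div_iff (by exact_mod_cast hq)] at h
  exact_mod_cast h

theorem lcm_eq_mul_ediv_gcd {m n : ℤ} (hm : 0 ≤ m) (hn : 0 ≤ n) :
    (lcm m n : ℤ) = m * n / gcd m n := by
  rcases eq_or_ne (gcd m n : ℤ) 0 with h | h
  · obtain ⟨rfl, rfl⟩ := gcd_eq_zero_iff.mp (by exact_mod_cast h)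
    simp
  · refine Int.eq_ediv_of_mul_eq_right h ?_
    have := gcd_mul_lcm m n
    rw [← natAbs_of_nonneg hm, ← natAbs_of_nonneg hn]
    exact_mod_cast this

theorem dvd_of_mul_eq_mul_of_gcd_eq_one {m n p q : ℤ} (hpq : gcd p q = 1) (h : m * q = n * p) :
    q ∣ n :=
  (isCoprime_iff_gcd_eq_one.mpr hpq).symm.dvd_of_dvd_mul_right ⟨m, by rw [← h, mul_comm]⟩

end Int

theorem stmt_4 (u v : ℚ) (u₁ u₂ v₁ v₂ : ℤ) (hu₂ : 0 < u₂) (hv₂ : 0 < v₂)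
    (hu : u = (u₁ : ℚ) / (u₂ : ℚ)) (hv : v = (v₁ : ℚ) / (v₂ : ℚ))
    (hcu : Int.gcd u₁ u₂ = 1) (hcv : Int.gcd v₁ v₂ = 1)
    (d : ℤ) (hd : d = Int.gcd u₂ v₂)
    (τ : ℂ) (hτ : τ.im ≠ 0) (hquad : τ ^ 2 = (u : ℂ) * τ + (v : ℂ))
    (a b A B : ℤ)
    (h : ((a : ℂ) + (b : ℂ) * τ) * τ = (A : ℂ) + (B : ℂ) * τ) :
    ∃ b' : ℤ, b = u₂ * v₂ / d * b' ∧ A = u₂ * v₁ / d * b' ∧ B = a + u₁ * v₂ / d * b' := by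
  obtain ⟨hA, hB⟩ : (A : ℚ) = b * v ∧ (B : ℚ) = a + b * u := by
    exact_mod_cast Complex.coeff_eq_of_mul_eq_of_sq_eq (u := u) (v := v) (a := a) (b := b)
      (A := A) (B := B) hτ (by simpa using hquad) (by simpa using h)
  have hAv : A * v₂ = b * v₁ :=
    Int.mul_eq_mul_of_cast_eq_mul_div hv₂.ne' (hv ▸ by exact_mod_cast hA)
  have hBu : (B - a) * u₂ = b * u₁ :=
    Int.mul_eq_mul_of_cast_eq_mul_div hu₂.ne' (hu ▸ by push_cast; linarith)
  obtain ⟨b', hb'⟩ : u₂ * v₂ / d ∣ b := by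
    rw [hd, ← Int.lcm_eq_mul_ediv_gcd hu₂.le hv₂.le]
    exact Int.coe_lcm_dvd_iff.mpr ⟨Int.dvd_of_mul_eq_mul_of_gcd_eq_one hcu hBu,
      Int.dvd_of_mul_eq_mul_of_gcd_eq_one hcv hAv⟩
  have hdu : d ∣ u₂ := hd ▸ Int.gcd_dvd_left u₂ v₂
  have hdv : d ∣ v₂ := hd ▸ Int.gcd_dvd_right u₂ v₂
  refine ⟨b', hb', ?_, ?_⟩
  · rw [Int.mul_ediv_assoc' _ hdu] at hb' ⊢
    refine mul_right_cancel₀ hv₂.ne' ?_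
    rw [hAv, hb']
    ring
  · rw [Int.mul_ediv_assoc _ hdv] at hb' ⊢
    rw [← sub_eq_iff_eq_add']
    refine mul_right_cancel₀ hu₂.ne' ?_
    rw [hBu, hb']
    ring
end

section
/- Let u₁, u₂, v₁, v₂ be integers with u₂, v₂ > 0, gcd(u₁, u₂) = 1 and gcd(v₁, v₂) = 1, and let d = gcd(u₂, v₂). Let a, b' be integers and set A = (u₂v₁/d)·b', b = (u₂v₂/d)·b', B = a + (u₁v₂/d)·b'. Then gcd(a, A, b, B) = 1 if and only if gcd(a, b') = 1. -/
/-! Writing `u₂ = d m` and `v₂ = d n` with `gcd(m, n) = 1`, the four numbers are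
`a`, `m v₁ b'`, `m v₂ b'` and `a + u₁ n b'`, which generate the same ideal of `ℤ` as
`a`, `m v₁ b'`, `m v₂ b'`, `u₁ n b'`. The three coefficients have no common factor:
`gcd(m v₁, m v₂) = |m|` because `gcd(v₁, v₂) = 1`, and `m` is coprime to `u₁` (it divides `u₂`)
and to `n`. So the ideal is `(a, b')`, and the four-term gcd is exactly `gcd(a, b')`. -/

namespace Int

theorem dvd_of_dvd_mul_of_dvd_mul_of_isCoprime {k s t y : ℤ} (hs : k ∣ s * y) (ht : k ∣ t * y)
    (hst : IsCoprime s t) : k ∣ y := by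
  obtain ⟨α, β, hαβ⟩ := hst
  have hy : y = α * (s * y) + β * (t * y) := by linear_combination -y * hαβ
  rw [hy]
  exact dvd_add (hs.mul_left α) (ht.mul_left β)

theorem gcd_gcd_mul_gcd_mul_add_mul (x y p q r : ℤ) (hpqr : IsCoprime (gcd p q : ℤ) r) :
    gcd (gcd x (p * y)) (gcd (q * y) (x + r * y)) = gcd x y := by
  apply Nat.dvd_antisymm
  · set g := gcd (gcd x (p * y)) (gcd (q * y) (x + r * y))
    have hleft : (g : ℤ) ∣ gcd x (p * y) := gcd_dvd_left _ _
    have hright : (g : ℤ) ∣ gcd (q * y) (x + r * y) := gcd_dvd_right _ _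
    have hx : (g : ℤ) ∣ x := hleft.trans (gcd_dvd_left _ _)
    have hpy : (g : ℤ) ∣ p * y := hleft.trans (gcd_dvd_right _ _)
    have hqy : (g : ℤ) ∣ q * y := hright.trans (gcd_dvd_left _ _)
    have hry : (g : ℤ) ∣ r * y := by
      simpa using dvd_sub (hright.trans (gcd_dvd_right _ _)) hx
    have hgcd : (g : ℤ) ∣ gcd p q * y := by
      rw [gcd_eq_gcd_ab p q, add_mul, mul_right_comm, mul_right_comm q]
      exact dvd_add (hpy.mul_right _) (hqy.mul_right _)
    exact natCast_dvd_natCast.mp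
      (dvd_coe_gcd hx (dvd_of_dvd_mul_of_dvd_mul_of_isCoprime hgcd hry hpqr))
  · have hx : (gcd x y : ℤ) ∣ x := gcd_dvd_left x y
    have hy : (gcd x y : ℤ) ∣ y := gcd_dvd_right x y
    exact natCast_dvd_natCast.mp <| dvd_coe_gcd
      (dvd_coe_gcd hx (hy.mul_left p))
      (dvd_coe_gcd (hy.mul_left q) (dvd_add hx (hy.mul_left r)))

theorem isCoprime_gcd_mul_mul {m v₁ v₂ r : ℤ} (hv : IsCoprime v₁ v₂) (hm : IsCoprime m r) :
    IsCoprime (gcd (m * v₁) (m * v₂) : ℤ) r := by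
  rw [gcd_mul_left, isCoprime_iff_gcd_eq_one.mp hv, mul_one, natCast_natAbs,
    IsCoprime.abs_left_iff]
  exact hm

end Int

theorem stmt_5_general (u₁ u₂ v₁ v₂ : ℤ) (hu₂ : 0 < u₂)
    (hcu : Int.gcd u₁ u₂ = 1) (hcv : Int.gcd v₁ v₂ = 1)
    (d : ℤ) (hd : d = Int.gcd u₂ v₂) (a b' : ℤ) :
    Int.gcd (Int.gcd a (u₂ * v₁ / d * b'))
        (Int.gcd (u₂ * v₂ / d * b') (a + u₁ * v₂ / d * b')) = 1 ↔
      Int.gcd a b' = 1 := by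
  have hdu : d ∣ u₂ := hd ▸ Int.gcd_dvd_left u₂ v₂
  have hdv : d ∣ v₂ := hd ▸ Int.gcd_dvd_right u₂ v₂
  have hmn : IsCoprime (u₂ / d) (v₂ / d) := by
    rw [Int.isCoprime_iff_gcd_eq_one, hd]
    exact Int.gcd_div_gcd_div_gcd (Int.gcd_pos_of_ne_zero_left v₂ hu₂.ne')
  have hmu : IsCoprime (u₂ / d) u₁ :=
    (Int.isCoprime_iff_gcd_eq_one.mpr hcu).symm.of_isCoprime_of_dvd_left
      (Int.ediv_dvd_of_dvd hdu)
  rw [Int.mul_ediv_assoc' _ hdu, Int.mul_ediv_assoc' _ hdu, Int.mul_ediv_assoc _ hdv,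
    Int.gcd_gcd_mul_gcd_mul_add_mul _ _ _ _ _
      (Int.isCoprime_gcd_mul_mul (Int.isCoprime_iff_gcd_eq_one.mpr hcv) (hmu.mul_right hmn))]

theorem stmt_5 (u₁ u₂ v₁ v₂ : ℤ) (hu₂ : 0 < u₂) (hv₂ : 0 < v₂)
    (hcu : Int.gcd u₁ u₂ = 1) (hcv : Int.gcd v₁ v₂ = 1)
    (d : ℤ) (hd : d = Int.gcd u₂ v₂) (a b' : ℤ) :
    Int.gcd (Int.gcd a (u₂ * v₁ / d * b'))
        (Int.gcd (u₂ * v₂ / d * b') (a + u₁ * v₂ / d * b')) = 1 ↔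
      Int.gcd a b' = 1 :=
  stmt_5_general u₁ u₂ v₁ v₂ hu₂ hcu hcv d hd a b'
end

section
/- Let τ ∈ ℂ with Im τ > 0, let L_τ = {m + k·τ : m, k ∈ ℤ}, let n ≥ 1 be an integer, and let a, b, A, B be integers with (a + b·τ)·τ = A + B·τ and a·B − b·A = n. Set λ = (a + b·τ)/n and M = [[a, A],[b, B]]. Then n·λ²·L_τ = L_τ if and only if every entry of M² is divisible by n. -/
/-!
Multiplication by `μ = a + bτ` acts on `L_τ` in the basis `(1, τ)` through `M`, so `n λ² = μ² / n`
acts through `M² / n`. If that matrix is integral, its determinant is `det M² / n² = 1`, so it is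
invertible over `ℤ` and `μ² / n` maps `L_τ` onto itself; conversely, if `μ² / n` preserves `L_τ`
it acts through some integer matrix `N`, and since `1, τ` are linearly independent over `ℤ`,
`M² = n N`.
-/

noncomputable section

/-- The columns of `M` are the coordinates of `c` and `c * τ` in the basis `(1, τ)` of `latt τ`. -/
def IsLattMulMatrix (τ c : ℂ) (M : Matrix (Fin 2) (Fin 2) ℤ) : Prop :=
  c = M 0 0 + M 1 0 * τ ∧ c * τ = M 0 1 + M 1 1 * τ

theorem latt_coords_injective {τ : ℂ} (hτ : τ.im ≠ 0) {x y x' y' : ℤ}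
    (h : (x : ℂ) + y * τ = x' + y' * τ) : x = x' ∧ y = y' := by
  have hy : y = y' := by
    have him := congrArg Complex.im h
    simp only [Complex.add_im, Complex.intCast_im, Complex.mul_im, Complex.intCast_re,
      zero_mul, add_zero, zero_add] at him
    exact_mod_cast mul_right_cancel₀ hτ him
  subst hy
  exact ⟨by exact_mod_cast add_right_cancel h, rfl⟩

namespace IsLattMulMatrix

variable {τ c d : ℂ} {M N : Matrix (Fin 2) (Fin 2) ℤ}

theorem unique (hτ : τ.im ≠ 0) (hM : IsLattMulMatrix τ c M) (hN : IsLattMulMatrix τ c N) :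
    M = N := by
  obtain ⟨h00, h10⟩ := latt_coords_injective hτ (hM.1.symm.trans hN.1)
  obtain ⟨h01, h11⟩ := latt_coords_injective hτ (hM.2.symm.trans hN.2)
  ext i j
  fin_cases i <;> fin_cases j <;> assumption

theorem mul (hM : IsLattMulMatrix τ c M) (hN : IsLattMulMatrix τ d N) :
    IsLattMulMatrix τ (c * d) (M * N) := by
  obtain ⟨hc, hcτ⟩ := hM
  obtain ⟨hd, hdτ⟩ := hN
  simp only [IsLattMulMatrix, Matrix.mul_apply, Fin.sum_univ_two]
  push_cast
  constructor
  · linear_combination c * hd + (N 0 0 : ℂ) * hc + (N 1 0 : ℂ) * hcτ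
  · linear_combination c * hdτ + (N 0 1 : ℂ) * hc + (N 1 1 : ℂ) * hcτ

theorem smul_iff {k : ℤ} (hk : k ≠ 0) :
    IsLattMulMatrix τ (k * c) (k • N) ↔ IsLattMulMatrix τ c N := by
  have hk' : (k : ℂ) ≠ 0 := by exact_mod_cast hk
  simp only [IsLattMulMatrix, Matrix.smul_apply, smul_eq_mul, Int.cast_mul, mul_assoc,
    ← mul_add]
  exact and_congr (mul_right_inj' hk') (mul_right_inj' hk')

/-- Cayley–Hamilton in dimension two: `adj M = tr M - M`. -/
theorem trace_sub (hM : IsLattMulMatrix τ c M) :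
    IsLattMulMatrix τ (M.trace - c) M.adjugate := by
  obtain ⟨hc, hcτ⟩ := hM
  simp only [IsLattMulMatrix, Matrix.adjugate_fin_two, Matrix.trace_fin_two, Matrix.of_apply,
    Matrix.cons_val', Matrix.cons_val_zero, Matrix.cons_val_one, Matrix.empty_val',
    Matrix.cons_val_fin_one]
  push_cast
  constructor
  · linear_combination -hc
  · linear_combination -hcτ

theorem image_subset (hM : IsLattMulMatrix τ c M) : (c * ·) '' latt τ ⊆ latt τ := by
  rintro _ ⟨_, ⟨m, k, rfl⟩, rfl⟩
  refine ⟨m * M 0 0 + k * M 0 1, m * M 1 0 + k * M 1 1, ?_⟩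
  push_cast
  linear_combination (m : ℂ) * hM.1 + (k : ℂ) * hM.2

theorem image_eq_of_det_eq_one (hM : IsLattMulMatrix τ c M) (hdet : M.det = 1) :
    (c * ·) '' latt τ = latt τ := by
  refine (image_subset hM).antisymm fun z hz => ?_
  have hinv : c * (M.trace - c) = 1 := by
    have h := hM.mul hM.trace_sub
    rw [Matrix.mul_adjugate, hdet, one_smul] at h
    simpa using h.1
  refine ⟨(M.trace - c) * z, hM.trace_sub.image_subset ⟨z, hz, rfl⟩, ?_⟩
  simp only [← mul_assoc, hinv, one_mul]

end IsLattMulMatrix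

theorem exists_isLattMulMatrix_of_image_subset {τ c : ℂ} (h : (c * ·) '' latt τ ⊆ latt τ) :
    ∃ M, IsLattMulMatrix τ c M := by
  obtain ⟨p, r, hc⟩ : c * 1 ∈ latt τ := h ⟨1, ⟨1, 0, by simp⟩, rfl⟩
  obtain ⟨q, s, hcτ⟩ : c * τ ∈ latt τ := h ⟨τ, ⟨0, 1, by simp⟩, rfl⟩
  exact ⟨!![p, q; r, s], by simpa using hc, by simpa using hcτ⟩

theorem stmt_9 (τ : ℂ) (hτ : 0 < τ.im) (n : ℕ) (hn : 1 ≤ n) (a b A B : ℤ)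
    (hquad : ((a : ℂ) + (b : ℂ) * τ) * τ = (A : ℂ) + (B : ℂ) * τ)
    (hdet : a * B - b * A = (n : ℤ)) :
    ((fun x => (n : ℂ) * (((a : ℂ) + (b : ℂ) * τ) / (n : ℂ)) ^ 2 * x) '' latt τ = latt τ) ↔
    (∀ i j : Fin 2,
      (n : ℤ) ∣ ((!![a, A; b, B] : Matrix (Fin 2) (Fin 2) ℤ) * !![a, A; b, B]) i j) := by
  set M : Matrix (Fin 2) (Fin 2) ℤ := !![a, A; b, B]
  set c := (n : ℂ) * (((a : ℂ) + (b : ℂ) * τ) / (n : ℂ)) ^ 2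
  have hn0 : (n : ℤ) ≠ 0 := by omega
  have hμ : IsLattMulMatrix τ (a + b * τ) M := ⟨by simp [M], by simpa [M] using hquad⟩
  have hμ2 : IsLattMulMatrix τ ((n : ℤ) * c) (M * M) := by
    convert hμ.mul hμ using 1
    have hnC : (n : ℂ) ≠ 0 := by exact_mod_cast hn0
    simp only [c, Int.cast_natCast]
    field_simp
  constructor
  · intro h i j
    obtain ⟨N, hN⟩ := exists_isLattMulMatrix_of_image_subset h.subset
    rw [hμ2.unique hτ.ne' ((IsLattMulMatrix.smul_iff hn0).mpr hN)]
    exact dvd_mul_right _ _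
  · intro hdvd
    obtain ⟨N, hMN⟩ : ∃ N, M * M = (n : ℤ) • N :=
      ⟨Matrix.of fun i j => (M * M) i j / n, by
        ext i j; simp [Int.mul_ediv_cancel' (hdvd i j)]⟩
    refine ((IsLattMulMatrix.smul_iff hn0).mp (hMN ▸ hμ2)).image_eq_of_det_eq_one ?_
    have hdetN : (n : ℤ) ^ 2 * N.det = (n : ℤ) ^ 2 * 1 := by
      have h := Matrix.det_smul N (n : ℤ)
      rw [← hMN, Matrix.det_mul, Matrix.det_fin_two_of, Fintype.card_fin] at h
      linear_combination -h + (a * B - b * A + n) * hdet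
    exact mul_left_cancel₀ (pow_ne_zero 2 hn0) hdetN
end
end

section
/- Let u, v ∈ ℚ with Δ = u² + 4v < 0, written u = u₁/u₂ and v = v₁/v₂ in lowest terms with u₂, v₂ > 0, and let d = gcd(u₂, v₂). Let n ≥ 2 be an integer and suppose there exist integers a, b' with gcd(a, b') = 1 such that n = a·(a + (u₁v₂/d)·b') − ((u₂v₂/d)·b')·((u₂v₁/d)·b') and n divides 2a + (u₁v₂/d)·b'. Then n = 2, or n = 3, or (n : ℚ) = −u₂²v₂²·Δ/(4d²), or (n : ℚ) = −u₂²v₂²·Δ/d². -/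
/-!
With c = u₁v₂/d and e = (u₂v₂/d)(u₂v₁/d), the integer D = c² + 4e equals u₂²v₂²Δ/d² < 0, and
completing the square gives 4n = t² + |D| b'² with t = 2a + c b'. If n ∣ t ≠ 0 then
n² + 1 ≤ t² + |D| b'² = 4n, forcing n ≤ 3. If t = 0 then b' ∣ 2a, so coprimality gives b' ∣ 2,
i.e. b'² ∈ {1, 4}, and 4n = |D| b'² yields n = |D|/4 or n = |D|.
-/

theorem Int.sq_eq_one_or_four_of_dvd_two {b : ℤ} (hb : b ∣ 2) : b ^ 2 = 1 ∨ b ^ 2 = 4 := by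
  have habs : b.natAbs ∣ 2 := Int.natAbs_dvd_natAbs.mpr hb
  rw [← Int.natAbs_sq]
  rcases (Nat.dvd_prime Nat.prime_two).mp habs with h | h <;> simp [h]

theorem le_three_of_dvd_of_four_mul_eq_sq_add {n t b E : ℤ} (hn : 0 ≤ n) (hE : 0 < E)
    (hb : b ≠ 0) (ht : t ≠ 0) (hdvd : n ∣ t) (h4 : 4 * n = t ^ 2 + E * b ^ 2) : n ≤ 3 := by
  have hn_le : n ≤ |t| := Int.le_of_dvd (abs_pos.mpr ht) ((dvd_abs n t).mpr hdvd)
  have hsq : n ^ 2 ≤ t ^ 2 := by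
    rw [← sq_abs t]
    exact pow_le_pow_left₀ hn hn_le 2
  have hEb : 0 < E * b ^ 2 := by positivity
  nlinarith

/-- `n` and `2a + cb` are the norm and trace of `a + bτ`, where `τ² = cτ + e`. -/
theorem eq_two_or_three_or_of_norm_dvd_trace {a b c e n : ℤ} (hab : IsCoprime a b)
    (hdisc : c ^ 2 + 4 * e < 0) (hn : 2 ≤ n) (hnorm : n = a * (a + c * b) - e * b ^ 2)
    (hdvd : n ∣ 2 * a + c * b) :
    n = 2 ∨ n = 3 ∨ 4 * n = -(c ^ 2 + 4 * e) ∨ n = -(c ^ 2 + 4 * e) := by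
  have h4 : 4 * n = (2 * a + c * b) ^ 2 + -(c ^ 2 + 4 * e) * b ^ 2 := by
    rw [hnorm]; ring
  have hb : b ≠ 0 := by
    rintro rfl
    have ha : a ^ 2 = 1 := Int.isUnit_sq (isCoprime_zero_right.mp hab)
    rw [hnorm] at hn
    nlinarith
  rcases eq_or_ne (2 * a + c * b) 0 with ht | ht
  · have hb2 : b ∣ 2 := hab.symm.dvd_of_dvd_mul_right ⟨-c, by linear_combination ht⟩
    rw [ht] at h4
    rcases Int.sq_eq_one_or_four_of_dvd_two hb2 with hsq | hsq <;> rw [hsq] at h4 <;> omega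
  · have := le_three_of_dvd_of_four_mul_eq_sq_add (by omega) (by omega) hb ht hdvd h4
    omega

theorem discr_mul_sq_eq_of_dvd {u₁ u₂ v₁ v₂ d : ℤ} (hu₂ : u₂ ≠ 0) (hv₂ : v₂ ≠ 0)
    (hdu : d ∣ u₂) (hdv : d ∣ v₂) :
    ((((u₁ * v₂ / d) ^ 2 + 4 * ((u₂ * v₂ / d) * (u₂ * v₁ / d)) : ℤ)) : ℚ) * (d : ℚ) ^ 2 =
      (u₂ : ℚ) ^ 2 * (v₂ : ℚ) ^ 2 * (((u₁ : ℚ) / u₂) ^ 2 + 4 * ((v₁ : ℚ) / v₂)) := by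
  have hd : (d : ℚ) ≠ 0 := Int.cast_ne_zero.mpr (by rintro rfl; exact hu₂ (zero_dvd_iff.mp hdu))
  push_cast [Int.cast_div (dvd_mul_of_dvd_right hdv u₁) hd,
    Int.cast_div (dvd_mul_of_dvd_right hdv u₂) hd, Int.cast_div (dvd_mul_of_dvd_left hdu v₁) hd]
  field_simp

theorem stmt_10_general (u v : ℚ) (u₁ u₂ v₁ v₂ : ℤ) (hu₂ : 0 < u₂) (hv₂ : 0 < v₂)
    (hu : u = (u₁ : ℚ) / (u₂ : ℚ)) (hv : v = (v₁ : ℚ) / (v₂ : ℚ))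
    (d : ℤ) (hd : d = Int.gcd u₂ v₂)
    (hΔ : u ^ 2 + 4 * v < 0)
    (n : ℕ) (hn : 2 ≤ n)
    (h : ∃ a b' : ℤ, Int.gcd a b' = 1 ∧
        (n : ℤ) = a * (a + u₁ * v₂ / d * b') - (u₂ * v₂ / d * b') * (u₂ * v₁ / d * b') ∧
        (n : ℤ) ∣ 2 * a + u₁ * v₂ / d * b') :
    n = 2 ∨ n = 3 ∨
      (n : ℚ) = -((u₂ : ℚ) ^ 2 * (v₂ : ℚ) ^ 2 * (u ^ 2 + 4 * v)) / (4 * (d : ℚ) ^ 2) ∨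
      (n : ℚ) = -((u₂ : ℚ) ^ 2 * (v₂ : ℚ) ^ 2 * (u ^ 2 + 4 * v)) / (d : ℚ) ^ 2 := by
  obtain ⟨a, b, hab, hnorm, hdvd⟩ := h
  have hdisc := discr_mul_sq_eq_of_dvd (u₁ := u₁) (v₁ := v₁) hu₂.ne' hv₂.ne'
    (hd ▸ Int.gcd_dvd_left u₂ v₂) (hd ▸ Int.gcd_dvd_right u₂ v₂)
  rw [← hu, ← hv] at hdisc
  have hd0 : (d : ℚ) ≠ 0 := by
    rw [hd]; exact_mod_cast Int.gcd_ne_zero_left hu₂.ne'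
  set D : ℤ := (u₁ * v₂ / d) ^ 2 + 4 * ((u₂ * v₂ / d) * (u₂ * v₁ / d))
  have hneg : D < 0 := by
    have : (u₂ : ℚ) ^ 2 * (v₂ : ℚ) ^ 2 * (u ^ 2 + 4 * v) < 0 :=
      mul_neg_of_pos_of_neg (by positivity) hΔ
    rw [← hdisc] at this
    exact_mod_cast neg_of_mul_neg_left this (sq_nonneg _)
  rcases eq_two_or_three_or_of_norm_dvd_trace (Int.isCoprime_iff_gcd_eq_one.mpr hab) hneg
    (by exact_mod_cast hn) (by rw [hnorm]; ring) hdvd with h | h | h | h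
  · exact Or.inl (by exact_mod_cast h)
  · exact Or.inr (Or.inl (by exact_mod_cast h))
  all_goals
    refine Or.inr (Or.inr ?_)
    rw [← hdisc]
    field_simp
  · exact Or.inl (by linear_combination (by exact_mod_cast h : 4 * (n : ℚ) = -(D : ℚ)))
  · exact Or.inr (by linear_combination (by exact_mod_cast h : (n : ℚ) = -(D : ℚ)))

theorem stmt_10 (u v : ℚ) (u₁ u₂ v₁ v₂ : ℤ) (hu₂ : 0 < u₂) (hv₂ : 0 < v₂)
    (hu : u = (u₁ : ℚ) / (u₂ : ℚ)) (hv : v = (v₁ : ℚ) / (v₂ : ℚ))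
    (hcu : Int.gcd u₁ u₂ = 1) (hcv : Int.gcd v₁ v₂ = 1)
    (d : ℤ) (hd : d = Int.gcd u₂ v₂)
    (hΔ : u ^ 2 + 4 * v < 0)
    (n : ℕ) (hn : 2 ≤ n)
    (h : ∃ a b' : ℤ, Int.gcd a b' = 1 ∧
        (n : ℤ) = a * (a + u₁ * v₂ / d * b') - (u₂ * v₂ / d * b') * (u₂ * v₁ / d * b') ∧
        (n : ℤ) ∣ 2 * a + u₁ * v₂ / d * b') :
    n = 2 ∨ n = 3 ∨
      (n : ℚ) = -((u₂ : ℚ) ^ 2 * (v₂ : ℚ) ^ 2 * (u ^ 2 + 4 * v)) / (4 * (d : ℚ) ^ 2) ∨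
      (n : ℚ) = -((u₂ : ℚ) ^ 2 * (v₂ : ℚ) ^ 2 * (u ^ 2 + 4 * v)) / (d : ℚ) ^ 2 :=
  stmt_10_general u v u₁ u₂ v₁ v₂ hu₂ hv₂ hu hv d hd hΔ n hn h
end

section
/- Let u, v ∈ ℚ with Δ = u² + 4v < 0, written u = u₁/u₂ and v = v₁/v₂ in lowest terms with u₂, v₂ > 0, and let d = gcd(u₂, v₂). Then there exist an integer n and integers a, b' with gcd(a, b') = 1 such that (n : ℚ) = −u₂²v₂²·Δ/(4d²), n = a·(a + (u₁v₂/d)·b') − ((u₂v₂/d)·b')·((u₂v₁/d)·b'), and n divides 2a + (u₁v₂/d)·b', if and only if 2d divides u₁v₂. Moreover, when 2d divides u₁v₂, this is realized by b' = ±1 and a = −(u₁v₂/(2d))·b'. -/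
/-!
Put `p = u₁v₂/d`, `q = u₂v₂/d`, `r = u₂v₁/d`. Clearing denominators, the target value of `n` is
`-(p² + 4qr)/4`, so an integer `n` can take it only if `p` is even, i.e. `2d ∣ u₁v₂`. Conversely,
the two expressions are `det M` and `Tr M` for `M = [[a, r b'], [q b', a + p b']]`, and
`4 det M = (Tr M)² - (p² + 4qr) b'²`; so for `b' = ±1` and `a = -(p/2) b'` the trace vanishes,
`det M` is the required value, and it divides `Tr M = 0`.
-/

theorem neg_sq_mul_discr_div_eq {u₁ u₂ v₁ v₂ d : ℤ} (hu₂ : u₂ ≠ 0) (hv₂ : v₂ ≠ 0) (hd : d ≠ 0)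
    (hdu : d ∣ u₂) (hdv : d ∣ v₂) :
    -((u₂ : ℚ) ^ 2 * (v₂ : ℚ) ^ 2 * (((u₁ : ℚ) / u₂) ^ 2 + 4 * ((v₁ : ℚ) / v₂))) / (4 * (d : ℚ) ^ 2) =
      ((-((u₁ * v₂ / d) ^ 2 + 4 * (u₂ * v₂ / d) * (u₂ * v₁ / d)) : ℤ) : ℚ) / 4 := by
  have hdQ : (d : ℚ) ≠ 0 := by exact_mod_cast hd
  push_cast
  rw [Int.cast_div (dvd_mul_of_dvd_right hdv _) hdQ, Int.cast_div (dvd_mul_of_dvd_left hdu _) hdQ,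
    Int.cast_div (dvd_mul_of_dvd_left hdu _) hdQ]
  push_cast
  field_simp

theorem even_of_four_mul_eq_neg {p q r n : ℤ} (h : 4 * n = -(p ^ 2 + 4 * q * r)) : Even p :=
  (Int.even_pow' two_ne_zero).1 ⟨-2 * n - 2 * q * r, by linarith⟩

theorem four_mul_det_eq (p q r a b : ℤ) :
    4 * (a * (a + p * b) - (q * b) * (r * b)) = (2 * a + p * b) ^ 2 - (p ^ 2 + 4 * q * r) * b ^ 2 := by
  ring

theorem det_spec_of_trace_eq_zero {p q r a b : ℤ} (hb : b = 1 ∨ b = -1) (htr : 2 * a + p * b = 0) :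
    Int.gcd a b = 1 ∧ 4 * (a * (a + p * b) - (q * b) * (r * b)) = -(p ^ 2 + 4 * q * r) ∧
      a * (a + p * b) - (q * b) * (r * b) ∣ 2 * a + p * b := by
  have hb2 : b ^ 2 = 1 := by rcases hb with rfl | rfl <;> norm_num
  refine ⟨by rcases hb with rfl | rfl <;> simp, ?_, htr ▸ dvd_zero _⟩
  rw [four_mul_det_eq, htr, hb2]
  ring

theorem two_mul_add_ediv_mul_eq_zero {x d a b : ℤ} (hdx : d ∣ x) (hd : d ≠ 0)
    (ha : (a : ℚ) = -((x : ℚ) / (2 * d)) * b) : 2 * a + x / d * b = 0 := by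
  have hdQ : (d : ℚ) ≠ 0 := by exact_mod_cast hd
  have : ((2 * a + x / d * b : ℤ) : ℚ) = 0 := by
    push_cast
    rw [Int.cast_div hdx hdQ, ha]
    field_simp
    ring
  exact_mod_cast this

theorem stmt_11_general (u v : ℚ) (u₁ u₂ v₁ v₂ : ℤ) (hu₂ : 0 < u₂) (hv₂ : 0 < v₂)
    (hu : u = (u₁ : ℚ) / (u₂ : ℚ)) (hv : v = (v₁ : ℚ) / (v₂ : ℚ))
    (d : ℤ) (hd : d = Int.gcd u₂ v₂) :
    ((∃ n a b' : ℤ, Int.gcd a b' = 1 ∧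
        (n : ℚ) = -((u₂ : ℚ) ^ 2 * (v₂ : ℚ) ^ 2 * (u ^ 2 + 4 * v)) / (4 * (d : ℚ) ^ 2) ∧
        n = a * (a + u₁ * v₂ / d * b') - (u₂ * v₂ / d * b') * (u₂ * v₁ / d * b') ∧
        n ∣ 2 * a + u₁ * v₂ / d * b') ↔
      2 * d ∣ u₁ * v₂) ∧
    (2 * d ∣ u₁ * v₂ → ∀ b' : ℤ, (b' = 1 ∨ b' = -1) → ∀ a : ℤ,
      (a : ℚ) = -((u₁ : ℚ) * (v₂ : ℚ) / (2 * (d : ℚ))) * (b' : ℚ) →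
      Int.gcd a b' = 1 ∧
      ((a * (a + u₁ * v₂ / d * b') - (u₂ * v₂ / d * b') * (u₂ * v₁ / d * b') : ℤ) : ℚ) =
        -((u₂ : ℚ) ^ 2 * (v₂ : ℚ) ^ 2 * (u ^ 2 + 4 * v)) / (4 * (d : ℚ) ^ 2) ∧
      (a * (a + u₁ * v₂ / d * b') - (u₂ * v₂ / d * b') * (u₂ * v₁ / d * b')) ∣
        2 * a + u₁ * v₂ / d * b') := by
  have hd0 : 0 < d := hd ▸ Int.natCast_pos.2 (Int.gcd_pos_of_ne_zero_left v₂ hu₂.ne')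
  have hdu : d ∣ u₂ := hd ▸ Int.gcd_dvd_left u₂ v₂
  have hdv : d ∣ v₂ := hd ▸ Int.gcd_dvd_right u₂ v₂
  have hn (n : ℤ) : (n : ℚ) = -((u₂ : ℚ) ^ 2 * (v₂ : ℚ) ^ 2 * (u ^ 2 + 4 * v)) / (4 * (d : ℚ) ^ 2) ↔
      4 * n = -((u₁ * v₂ / d) ^ 2 + 4 * (u₂ * v₂ / d) * (u₂ * v₁ / d)) := by
    rw [hu, hv, neg_sq_mul_discr_div_eq hu₂.ne' hv₂.ne' hd0.ne' hdu hdv,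
      eq_div_iff four_ne_zero]
    norm_cast
    rw [mul_comm]
  have hp : Even (u₁ * v₂ / d) ↔ 2 * d ∣ u₁ * v₂ := by
    rw [even_iff_two_dvd, Int.dvd_div_iff_mul_dvd (dvd_mul_of_dvd_right hdv _), mul_comm]
  refine ⟨⟨fun ⟨n, a, b', _, hnE, _⟩ => hp.1 (even_of_four_mul_eq_neg ((hn n).1 hnE)),
    fun h => ?_⟩, fun _ b' hb' a ha => ?_⟩
  · obtain ⟨m, hm⟩ := hp.2 h
    obtain ⟨hgcd, hdet, hdvd⟩ := det_spec_of_trace_eq_zero (q := u₂ * v₂ / d) (r := u₂ * v₁ / d)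
      (Or.inl rfl) (show 2 * -m + u₁ * v₂ / d * 1 = 0 by rw [hm]; ring)
    exact ⟨_, -m, 1, hgcd, (hn _).2 hdet, rfl, hdvd⟩
  · have htr : 2 * a + u₁ * v₂ / d * b' = 0 :=
      two_mul_add_ediv_mul_eq_zero (dvd_mul_of_dvd_right hdv _) hd0.ne' (by exact_mod_cast ha)
    obtain ⟨hgcd, hdet, hdvd⟩ := det_spec_of_trace_eq_zero (q := u₂ * v₂ / d) (r := u₂ * v₁ / d) hb' htr
    exact ⟨hgcd, (hn _).2 hdet, hdvd⟩

theorem stmt_11 (u v : ℚ) (u₁ u₂ v₁ v₂ : ℤ) (hu₂ : 0 < u₂) (hv₂ : 0 < v₂)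
    (hu : u = (u₁ : ℚ) / (u₂ : ℚ)) (hv : v = (v₁ : ℚ) / (v₂ : ℚ))
    (hcu : Int.gcd u₁ u₂ = 1) (hcv : Int.gcd v₁ v₂ = 1)
    (d : ℤ) (hd : d = Int.gcd u₂ v₂)
    (hΔ : u ^ 2 + 4 * v < 0) :
    ((∃ n a b' : ℤ, Int.gcd a b' = 1 ∧
        (n : ℚ) = -((u₂ : ℚ) ^ 2 * (v₂ : ℚ) ^ 2 * (u ^ 2 + 4 * v)) / (4 * (d : ℚ) ^ 2) ∧
        n = a * (a + u₁ * v₂ / d * b') - (u₂ * v₂ / d * b') * (u₂ * v₁ / d * b') ∧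
        n ∣ 2 * a + u₁ * v₂ / d * b') ↔
      2 * d ∣ u₁ * v₂) ∧
    (2 * d ∣ u₁ * v₂ → ∀ b' : ℤ, (b' = 1 ∨ b' = -1) → ∀ a : ℤ,
      (a : ℚ) = -((u₁ : ℚ) * (v₂ : ℚ) / (2 * (d : ℚ))) * (b' : ℚ) →
      Int.gcd a b' = 1 ∧
      ((a * (a + u₁ * v₂ / d * b') - (u₂ * v₂ / d * b') * (u₂ * v₁ / d * b') : ℤ) : ℚ) =
        -((u₂ : ℚ) ^ 2 * (v₂ : ℚ) ^ 2 * (u ^ 2 + 4 * v)) / (4 * (d : ℚ) ^ 2) ∧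
      (a * (a + u₁ * v₂ / d * b') - (u₂ * v₂ / d * b') * (u₂ * v₁ / d * b')) ∣
        2 * a + u₁ * v₂ / d * b') :=
  stmt_11_general u v u₁ u₂ v₁ v₂ hu₂ hv₂ hu hv d hd
end

section
/- Let u, v ∈ ℚ with Δ = u² + 4v < 0, written u = u₁/u₂ and v = v₁/v₂ in lowest terms with u₂, v₂ > 0, and let d = gcd(u₂, v₂). Then there exist an integer n and integers a, b' with gcd(a, b') = 1 such that (n : ℚ) = −u₂²v₂²·Δ/d², n = a·(a + (u₁v₂/d)·b') − ((u₂v₂/d)·b')·((u₂v₁/d)·b'), and n divides 2a + (u₁v₂/d)·b', if and only if 2d does not divide u₁v₂. Moreover, when 2d does not divide u₁v₂, this is realized by b' = ±2 and a = −(u₁v₂/(2d))·b'. -/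
/-!
With `P = u₁v₂/d`, `Q = u₂v₂/d`, `R = u₂v₁/d` one has `N := -(P² + 4QR) = -u₂²v₂²Δ/d² > 0`, and
`2d ∣ u₁v₂ ↔ 2 ∣ P`. Completing the square,
`(2a + Pb)² + N b² = 4 (a(a + Pb) - QR b²)`,
so a solution of `a(a + Pb) - QR b² = N` with `N ∣ t := 2a + Pb` has `t² + N b² = 4N`: either
`t = 0` and `b = ±2`, or `N ≤ |t|` and hence `N ≤ 4`. If `P` is even then `4 ∣ N`, and in both
cases `a` and `b` come out even, so they are not coprime. If `P` is odd, `b = ±2`, `a = ∓P` is a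
coprime solution with `t = 0`.
-/

theorem four_dvd_and_two_dvd_of_sq_add_mul_sq {N t b : ℤ} (hN : 0 < N) (h4N : 4 ∣ N)
    (hNt : N ∣ t) (h : t ^ 2 + N * b ^ 2 = 4 * N) : 4 ∣ t ∧ 2 ∣ b := by
  by_cases ht : t = 0
  · subst ht
    have hb : b ^ 2 = 2 ^ 2 := by nlinarith
    rcases sq_eq_sq_iff_eq_or_eq_neg.mp hb with rfl | rfl <;> norm_num
  · have hNle : N ≤ |t| := Int.le_of_dvd (abs_pos.mpr ht) ((dvd_abs _ _).mpr hNt)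
    have hNN : N * N ≤ 4 * N := by nlinarith [sq_abs t, sq_nonneg b]
    have hN4 : N = 4 := by
      have := le_of_mul_le_mul_right hNN hN
      omega
    subst hN4
    obtain ⟨k, rfl⟩ := hNt
    have hk : k ≠ 0 := by rintro rfl; simp at ht
    have hb : b = 0 := by nlinarith [sq_nonneg b, Int.one_le_abs hk, sq_abs k]
    exact ⟨dvd_mul_right 4 k, hb ▸ dvd_zero 2⟩

section

variable {P Q R a b : ℤ}

theorem sq_add_neg_discr_mul_sq :
    (2 * a + P * b) ^ 2 + -(P ^ 2 + 4 * Q * R) * b ^ 2 =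
      4 * (a * (a + P * b) - Q * b * (R * b)) := by
  ring

theorem gcd_ne_one_of_two_dvd (hP : 2 ∣ P) (hN : 0 < -(P ^ 2 + 4 * Q * R))
    (hval : a * (a + P * b) - Q * b * (R * b) = -(P ^ 2 + 4 * Q * R))
    (hdvd : -(P ^ 2 + 4 * Q * R) ∣ 2 * a + P * b) : Int.gcd a b ≠ 1 := by
  have h4N : 4 ∣ -(P ^ 2 + 4 * Q * R) := by
    obtain ⟨m, rfl⟩ := hP
    exact ⟨-(m ^ 2 + Q * R), by ring⟩
  obtain ⟨ht, hb⟩ := four_dvd_and_two_dvd_of_sq_add_mul_sq hN h4N hdvd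
    (by rw [sq_add_neg_discr_mul_sq, hval])
  have ha : 2 ∣ a := by
    obtain ⟨k, hk⟩ := mul_dvd_mul hP hb
    obtain ⟨l, hl⟩ := ht
    exact ⟨l - k, by linarith⟩
  intro hab
  rw [← Int.isCoprime_iff_gcd_eq_one] at hab
  have := Int.isUnit_iff.mp (hab.isUnit_of_dvd' ha hb)
  omega

theorem gcd_eq_one_and_eq_neg_discr_of_not_two_dvd (hP : ¬ 2 ∣ P) (hb : b = 2 ∨ b = -2)
    (ha : 2 * a = -(P * b)) :
    Int.gcd a b = 1 ∧ a * (a + P * b) - Q * b * (R * b) = -(P ^ 2 + 4 * Q * R) ∧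
      2 * a + P * b = 0 := by
  have ht : 2 * a + P * b = 0 := by linarith
  have hb2 : b ^ 2 = 4 := by rcases hb with rfl | rfl <;> norm_num
  refine ⟨?_, ?_, ht⟩
  · have hodd : Odd a := by
      refine Int.not_even_iff_odd.mp fun ⟨k, hk⟩ => ?_
      rw [hk] at ha
      rcases hb with rfl | rfl <;> omega
    rw [← Int.isCoprime_iff_gcd_eq_one]
    rcases hb with rfl | rfl
    · exact Int.isCoprime_two_right.mpr hodd
    · exact (Int.isCoprime_two_right.mpr hodd).neg_right
  · have := (sq_add_neg_discr_mul_sq (P := P) (Q := Q) (R := R) (a := a) (b := b))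
    rw [ht, hb2] at this
    linarith

theorem exists_gcd_eq_one_iff_not_two_dvd (hN : 0 < -(P ^ 2 + 4 * Q * R)) :
    (∃ a b : ℤ, Int.gcd a b = 1 ∧ a * (a + P * b) - Q * b * (R * b) = -(P ^ 2 + 4 * Q * R) ∧
      -(P ^ 2 + 4 * Q * R) ∣ 2 * a + P * b) ↔ ¬ 2 ∣ P := by
  constructor
  · rintro ⟨a, b, hab, hval, hdvd⟩ hP
    exact gcd_ne_one_of_two_dvd hP hN hval hdvd hab
  · intro hP
    obtain ⟨hab, hval, ht⟩ :=
      gcd_eq_one_and_eq_neg_discr_of_not_two_dvd (Q := Q) (R := R) hP (Or.inl rfl)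
        (show 2 * -P = -(P * 2) by ring)
    exact ⟨-P, 2, hab, hval, ht ▸ dvd_zero _⟩

end

theorem neg_discr_eq_of_mul_eq {u₁ u₂ v₁ v₂ d P Q R : ℤ} (hu₂ : u₂ ≠ 0) (hv₂ : v₂ ≠ 0)
    (hd : d ≠ 0) (hP : d * P = u₁ * v₂) (hQ : d * Q = u₂ * v₂) (hR : d * R = u₂ * v₁) :
    ((-(P ^ 2 + 4 * Q * R) : ℤ) : ℚ) =
      -((u₂ : ℚ) ^ 2 * (v₂ : ℚ) ^ 2 * ((u₁ / u₂ : ℚ) ^ 2 + 4 * (v₁ / v₂ : ℚ))) /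
        (d : ℚ) ^ 2 := by
  have hPq : (d : ℚ) * P = u₁ * v₂ := by exact_mod_cast hP
  have hQq : (d : ℚ) * Q = u₂ * v₂ := by exact_mod_cast hQ
  have hRq : (d : ℚ) * R = u₂ * v₁ := by exact_mod_cast hR
  push_cast
  field_simp
  linear_combination
    (-(d * P + u₁ * v₂)) * hPq + (-4 * d * R) * hQq + (-4 * u₂ * v₂) * hRq

theorem stmt_12_general (u v : ℚ) (u₁ u₂ v₁ v₂ : ℤ) (hu₂ : 0 < u₂) (hv₂ : 0 < v₂)
    (hu : u = (u₁ : ℚ) / (u₂ : ℚ)) (hv : v = (v₁ : ℚ) / (v₂ : ℚ))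
    (d : ℤ) (hd : d = Int.gcd u₂ v₂)
    (hΔ : u ^ 2 + 4 * v < 0) :
    ((∃ n a b' : ℤ, Int.gcd a b' = 1 ∧
        (n : ℚ) = -((u₂ : ℚ) ^ 2 * (v₂ : ℚ) ^ 2 * (u ^ 2 + 4 * v)) / ((d : ℚ) ^ 2) ∧
        n = a * (a + u₁ * v₂ / d * b') - (u₂ * v₂ / d * b') * (u₂ * v₁ / d * b') ∧
        n ∣ 2 * a + u₁ * v₂ / d * b') ↔
      ¬(2 * d ∣ u₁ * v₂)) ∧
    (¬(2 * d ∣ u₁ * v₂) → ∀ b' : ℤ, (b' = 2 ∨ b' = -2) → ∀ a : ℤ,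
      (a : ℚ) = -((u₁ : ℚ) * (v₂ : ℚ) / (2 * (d : ℚ))) * (b' : ℚ) →
      Int.gcd a b' = 1 ∧
      ((a * (a + u₁ * v₂ / d * b') - (u₂ * v₂ / d * b') * (u₂ * v₁ / d * b') : ℤ) : ℚ) =
        -((u₂ : ℚ) ^ 2 * (v₂ : ℚ) ^ 2 * (u ^ 2 + 4 * v)) / ((d : ℚ) ^ 2) ∧
      (a * (a + u₁ * v₂ / d * b') - (u₂ * v₂ / d * b') * (u₂ * v₁ / d * b')) ∣
        2 * a + u₁ * v₂ / d * b') := by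
  subst hu hv
  have hd0 : d ≠ 0 := by rw [hd]; exact_mod_cast (Int.gcd_pos_of_ne_zero_left v₂ hu₂.ne').ne'
  have hdu : d ∣ u₂ := hd ▸ Int.gcd_dvd_left u₂ v₂
  have hdv : d ∣ v₂ := hd ▸ Int.gcd_dvd_right u₂ v₂
  have hP := Int.mul_ediv_cancel' (hdv.mul_left u₁)
  have hQ := Int.mul_ediv_cancel' (hdv.mul_left u₂)
  have hR := Int.mul_ediv_cancel' (hdu.mul_right v₁)
  have hNq := neg_discr_eq_of_mul_eq hu₂.ne' hv₂.ne' hd0 hP hQ hR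
  have hPq : (d : ℚ) * (u₁ * v₂ / d : ℤ) = u₁ * v₂ := by exact_mod_cast hP
  generalize u₁ * v₂ / d = P at *
  generalize u₂ * v₂ / d = Q at *
  generalize u₂ * v₁ / d = R at *
  have hpar : 2 * d ∣ u₁ * v₂ ↔ 2 ∣ P := by
    rw [← hP, mul_comm d P, mul_dvd_mul_iff_right hd0]
  have hN : 0 < -(P ^ 2 + 4 * Q * R) := by
    have hu₂v₂ : (0 : ℚ) < (u₂ : ℚ) ^ 2 * (v₂ : ℚ) ^ 2 := by positivity
    exact_mod_cast hNq ▸ div_pos (by nlinarith) (by positivity)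
  rw [hpar, ← exists_gcd_eq_one_iff_not_two_dvd hN]
  refine ⟨⟨?_, ?_⟩, ?_⟩
  · rintro ⟨n, a, b, hab, hn, hval, hdvd⟩
    obtain rfl : n = -(P ^ 2 + 4 * Q * R) := by exact_mod_cast hn.trans hNq.symm
    exact ⟨a, b, hab, hval.symm, hdvd⟩
  · rintro ⟨a, b, hab, hval, hdvd⟩
    exact ⟨_, a, b, hab, hNq, hval.symm, hdvd⟩
  · intro hodd b hb a ha
    have ha' : 2 * a = -(P * b) := by
      have : ((2 * a : ℤ) : ℚ) = ((-(P * b) : ℤ) : ℚ) := by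
        push_cast; rw [ha, ← hPq]; field_simp
      exact_mod_cast this
    obtain ⟨hab, hval, ht⟩ := gcd_eq_one_and_eq_neg_discr_of_not_two_dvd
      ((exists_gcd_eq_one_iff_not_two_dvd hN).mp hodd) hb ha' (Q := Q) (R := R)
    exact ⟨hab, by rw [hval]; exact hNq, by rw [hval, ht]; exact dvd_zero _⟩

theorem stmt_12 (u v : ℚ) (u₁ u₂ v₁ v₂ : ℤ) (hu₂ : 0 < u₂) (hv₂ : 0 < v₂)
    (hu : u = (u₁ : ℚ) / (u₂ : ℚ)) (hv : v = (v₁ : ℚ) / (v₂ : ℚ))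
    (hcu : Int.gcd u₁ u₂ = 1) (hcv : Int.gcd v₁ v₂ = 1)
    (d : ℤ) (hd : d = Int.gcd u₂ v₂)
    (hΔ : u ^ 2 + 4 * v < 0) :
    ((∃ n a b' : ℤ, Int.gcd a b' = 1 ∧
        (n : ℚ) = -((u₂ : ℚ) ^ 2 * (v₂ : ℚ) ^ 2 * (u ^ 2 + 4 * v)) / ((d : ℚ) ^ 2) ∧
        n = a * (a + u₁ * v₂ / d * b') - (u₂ * v₂ / d * b') * (u₂ * v₁ / d * b') ∧
        n ∣ 2 * a + u₁ * v₂ / d * b') ↔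
      ¬(2 * d ∣ u₁ * v₂)) ∧
    (¬(2 * d ∣ u₁ * v₂) → ∀ b' : ℤ, (b' = 2 ∨ b' = -2) → ∀ a : ℤ,
      (a : ℚ) = -((u₁ : ℚ) * (v₂ : ℚ) / (2 * (d : ℚ))) * (b' : ℚ) →
      Int.gcd a b' = 1 ∧
      ((a * (a + u₁ * v₂ / d * b') - (u₂ * v₂ / d * b') * (u₂ * v₁ / d * b') : ℤ) : ℚ) =
        -((u₂ : ℚ) ^ 2 * (v₂ : ℚ) ^ 2 * (u ^ 2 + 4 * v)) / ((d : ℚ) ^ 2) ∧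
      (a * (a + u₁ * v₂ / d * b') - (u₂ * v₂ / d * b') * (u₂ * v₁ / d * b')) ∣
        2 * a + u₁ * v₂ / d * b') :=
  stmt_12_general u v u₁ u₂ v₁ v₂ hu₂ hv₂ hu hv d hd hΔ
end

section
/- Let u, v ∈ ℚ with Δ = u² + 4v < 0, written u = u₁/u₂ and v = v₁/v₂ in lowest terms with u₂, v₂ > 0, and let d = gcd(u₂, v₂). Suppose n ≥ 2 and m ≥ 2 are integers such that both admit integers a, b' with gcd(a, b') = 1 satisfying k = a·(a + (u₁v₂/d)·b') − ((u₂v₂/d)·b')·((u₂v₁/d)·b') and k ∣ 2a + (u₁v₂/d)·b' (for k = n and for k = m respectively, with possibly different pairs (a, b')). Then n = m. In other words, for each CM elliptic curve E = ℂ/(ℤ + ℤτ), τ² = uτ + v, there is at most one n ≥ 2 for which E admits a cyclic subgroup C of order n with (E, C) ∼ (E/C, E[n]/C). -/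
/-!
Write `t = 2a + Pb` for the trace and `D = P² - 4c` for the discriminant of the order; in the
theorem `D = (u₂v₂/d)² (u² + 4v) < 0`. The norm `n = a² + Pab + cb²` satisfies
`4n = t² - Db²`. If `t ≠ 0`, then `n ∣ t` gives `n² ≤ t² < 4n`, so `n ∈ {2, 3}` and
`D ∈ {-4, -3}`. If `t = 0`, coprimality of `a, b` forces `b ∣ 2`, so `n = -D/4`, or `n = -D`
with `4 ∤ D`. In every case `n` is a function of `D` alone.
-/

/-- The level `-D/4` or `-D` comes from trace zero; for `D = -4` that would be `1`, and the
level `2` comes from a nonzero trace. -/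
def levelOfDisc (D : ℤ) : ℤ := if D = -4 then 2 else if 4 ∣ D then -D / 4 else -D

lemma levelOfDisc_neg_four_mul {n : ℤ} (hn : 2 ≤ n) : levelOfDisc (-4 * n) = n := by
  rw [levelOfDisc, if_neg (by omega), if_pos (by omega)]
  omega

lemma levelOfDisc_neg {n : ℤ} (hn : ¬ 4 ∣ n) : levelOfDisc (-n) = n := by
  rw [levelOfDisc, if_neg (by omega), if_neg (by omega), neg_neg]

lemma Int.sq_eq_one_or_four_le {b : ℤ} (hb : b ≠ 0) : b ^ 2 = 1 ∨ 4 ≤ b ^ 2 := by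
  rcases (by omega : b = 1 ∨ b = -1 ∨ 2 ≤ b ∨ b ≤ -2) with rfl | rfl | h | h
  · norm_num
  · norm_num
  · right; nlinarith
  · right; nlinarith

section Disc

variable {P c : ℤ}

lemma disc_emod_four_of_even (hP : Even P) : (P ^ 2 - 4 * c) % 4 = 0 := by
  obtain ⟨k, rfl⟩ := hP
  have : (k + k) ^ 2 - 4 * c = 4 * (k ^ 2 - c) := by ring
  omega

lemma disc_emod_four_of_odd (hP : Odd P) : (P ^ 2 - 4 * c) % 4 = 1 := by
  obtain ⟨k, rfl⟩ := hP
  have : (2 * k + 1) ^ 2 - 4 * c = 4 * (k ^ 2 + k - c) + 1 := by ring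
  omega

lemma disc_ne_neg_one : P ^ 2 - 4 * c ≠ -1 := by
  rcases Int.even_or_odd P with hP | hP
  · have := disc_emod_four_of_even (c := c) hP; omega
  · have := disc_emod_four_of_odd (c := c) hP; omega

end Disc

lemma disc_eq_of_trace_ne_zero {D n t b : ℤ} (hD : D < 0) (hD₁ : D ≠ -1) (hn : 2 ≤ n)
    (hb : b ≠ 0) (h4 : 4 * n = t ^ 2 - D * b ^ 2) (hnt : n ∣ t) (ht : t ≠ 0) :
    n = 2 ∧ D = -4 ∨ n = 3 ∧ D = -3 := by
  obtain ⟨s, rfl⟩ := hnt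
  have hs1 : s ^ 2 = 1 := by
    rcases Int.sq_eq_one_or_four_le (right_ne_zero_of_mul ht) with h | h
    · exact h
    · nlinarith [mul_le_mul_of_nonneg_left h (sq_nonneg n)]
  have hn3 : n * (4 - n) = -D * b ^ 2 := by linear_combination h4 + n ^ 2 * hs1
  rcases Int.sq_eq_one_or_four_le hb with hb1 | hb4
  · rw [hb1, mul_one] at hn3
    have : n ≤ 3 := by nlinarith
    rcases (by omega : n = 2 ∨ n = 3) with rfl | rfl <;> omega
  · have : 8 ≤ -D * b ^ 2 := by nlinarith [(by omega : 2 ≤ -D)]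
    nlinarith [sq_nonneg (n - 2)]

lemma disc_eq_of_trace_eq_zero {P c a b n : ℤ} (hab : IsCoprime a b)
    (h4 : 4 * n = -(P ^ 2 - 4 * c) * b ^ 2) (ht : 2 * a + P * b = 0) :
    P ^ 2 - 4 * c = -4 * n ∨ P ^ 2 - 4 * c = -n ∧ ¬ 4 ∣ n := by
  have hb : b ∣ 2 := hab.symm.dvd_of_dvd_mul_right ⟨-P, by linarith⟩
  rcases (Nat.dvd_prime Nat.prime_two).1 (Int.natAbs_dvd_natAbs.2 hb) with hb1 | hb2
  · left
    have hsq : b ^ 2 = 1 := by rw [← Int.natAbs_sq, hb1]; rfl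
    rw [hsq] at h4
    linarith
  · right
    have hP : Odd P := by
      rw [← Int.not_even_iff_odd]
      rintro ⟨k, rfl⟩
      have h2b : (2 : ℤ) ∣ b := Int.natAbs_dvd_natAbs.1 (by rw [hb2]; rfl)
      have h2a : (2 : ℤ) ∣ a := by
        rw [show a = -k * b by linarith]
        exact h2b.mul_left _
      have := Int.isUnit_iff.1 (hab.isUnit_of_dvd' h2a h2b)
      omega
    have := disc_emod_four_of_odd (c := c) hP
    have hsq : b ^ 2 = 4 := by rw [← Int.natAbs_sq, hb2]; rfl
    rw [hsq] at h4
    have hDn : P ^ 2 - 4 * c = -n := by linarith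
    exact ⟨hDn, by omega⟩

theorem eq_levelOfDisc {P c a b n : ℤ} (hD : P ^ 2 - 4 * c < 0) (hn : 2 ≤ n)
    (hab : IsCoprime a b) (hnorm : n = a ^ 2 + P * a * b + c * b ^ 2) (htr : n ∣ 2 * a + P * b) :
    n = levelOfDisc (P ^ 2 - 4 * c) := by
  have h4 : 4 * n = (2 * a + P * b) ^ 2 - (P ^ 2 - 4 * c) * b ^ 2 := by rw [hnorm]; ring
  have hb : b ≠ 0 := by
    rintro rfl
    have ha : a ^ 2 = 1 := Int.isUnit_sq (isCoprime_zero_right.1 hab)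
    have : n = a ^ 2 := by rw [hnorm]; ring
    omega
  by_cases ht : 2 * a + P * b = 0
  · have h4' : 4 * n = -(P ^ 2 - 4 * c) * b ^ 2 := by rw [h4, ht]; ring
    rcases disc_eq_of_trace_eq_zero hab h4' ht with hD' | ⟨hD', hn4⟩
    · rw [hD', levelOfDisc_neg_four_mul hn]
    · rw [hD', levelOfDisc_neg hn4]
  · rcases disc_eq_of_trace_ne_zero hD disc_ne_neg_one hn hb h4 htr ht with
      ⟨rfl, hD'⟩ | ⟨rfl, hD'⟩
    · rw [hD']; rfl
    · rw [hD']; rfl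

lemma disc_div_gcd_eq {u v : ℚ} {u₁ u₂ v₁ v₂ d : ℤ} (hu₂ : u₂ ≠ 0) (hv₂ : v₂ ≠ 0) (hd : d ≠ 0)
    (hdu : d ∣ u₂) (hdv : d ∣ v₂) (hu : u = u₁ / u₂) (hv : v = v₁ / v₂) :
    (((u₁ * v₂ / d) ^ 2 - 4 * -(u₂ * v₂ / d * (u₂ * v₁ / d)) : ℤ) : ℚ) =
      ((u₂ * v₂ / d : ℤ) : ℚ) ^ 2 * (u ^ 2 + 4 * v) := by
  have hdq : (d : ℚ) ≠ 0 := by exact_mod_cast hd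
  push_cast
  rw [Int.cast_div (hdv.mul_left _) hdq, Int.cast_div (hdv.mul_left _) hdq,
    Int.cast_div (hdu.mul_right _) hdq, hu, hv]
  push_cast
  field_simp
  ring

theorem stmt_15_general (u v : ℚ) (u₁ u₂ v₁ v₂ : ℤ) (hu₂ : 0 < u₂) (hv₂ : 0 < v₂)
    (hu : u = (u₁ : ℚ) / (u₂ : ℚ)) (hv : v = (v₁ : ℚ) / (v₂ : ℚ))
    (d : ℤ) (hd : d = Int.gcd u₂ v₂)
    (hΔ : u ^ 2 + 4 * v < 0)
    (n m : ℕ) (hn : 2 ≤ n) (hm : 2 ≤ m)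
    (hne : ∃ a b' : ℤ, Int.gcd a b' = 1 ∧
        (n : ℤ) = a * (a + u₁ * v₂ / d * b') - (u₂ * v₂ / d * b') * (u₂ * v₁ / d * b') ∧
        (n : ℤ) ∣ 2 * a + u₁ * v₂ / d * b')
    (hme : ∃ a b' : ℤ, Int.gcd a b' = 1 ∧
        (m : ℤ) = a * (a + u₁ * v₂ / d * b') - (u₂ * v₂ / d * b') * (u₂ * v₁ / d * b') ∧
        (m : ℤ) ∣ 2 * a + u₁ * v₂ / d * b') :
    n = m := by
  have hd0 : d ≠ 0 := by rw [hd]; exact_mod_cast (Int.gcd_pos_of_ne_zero_left v₂ hu₂.ne').ne'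
  have hdu : d ∣ u₂ := hd ▸ Int.gcd_dvd_left u₂ v₂
  have hdv : d ∣ v₂ := hd ▸ Int.gcd_dvd_right u₂ v₂
  have hQ : u₂ * v₂ / d ≠ 0 :=
    left_ne_zero_of_mul (by rw [Int.ediv_mul_cancel (hdv.mul_left u₂)]; positivity)
  have hD : (u₁ * v₂ / d) ^ 2 - 4 * -(u₂ * v₂ / d * (u₂ * v₁ / d)) < 0 := by
    have hDq : (((u₁ * v₂ / d) ^ 2 - 4 * -(u₂ * v₂ / d * (u₂ * v₁ / d)) : ℤ) : ℚ) < 0 := by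
      rw [disc_div_gcd_eq hu₂.ne' hv₂.ne' hd0 hdu hdv hu hv]
      exact mul_neg_of_pos_of_neg (sq_pos_of_ne_zero (by exact_mod_cast hQ)) hΔ
    exact_mod_cast hDq
  obtain ⟨a, b, hab, hnorm, htr⟩ := hne
  obtain ⟨a', b', hab', hnorm', htr'⟩ := hme
  have hn_eq := eq_levelOfDisc hD (by exact_mod_cast hn) (Int.isCoprime_iff_gcd_eq_one.2 hab)
    (by rw [hnorm]; ring) htr
  have hm_eq := eq_levelOfDisc hD (by exact_mod_cast hm) (Int.isCoprime_iff_gcd_eq_one.2 hab')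
    (by rw [hnorm']; ring) htr'
  exact_mod_cast hn_eq.trans hm_eq.symm

theorem stmt_15 (u v : ℚ) (u₁ u₂ v₁ v₂ : ℤ) (hu₂ : 0 < u₂) (hv₂ : 0 < v₂)
    (hu : u = (u₁ : ℚ) / (u₂ : ℚ)) (hv : v = (v₁ : ℚ) / (v₂ : ℚ))
    (hcu : Int.gcd u₁ u₂ = 1) (hcv : Int.gcd v₁ v₂ = 1)
    (d : ℤ) (hd : d = Int.gcd u₂ v₂)
    (hΔ : u ^ 2 + 4 * v < 0)
    (n m : ℕ) (hn : 2 ≤ n) (hm : 2 ≤ m)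
    (hne : ∃ a b' : ℤ, Int.gcd a b' = 1 ∧
        (n : ℤ) = a * (a + u₁ * v₂ / d * b') - (u₂ * v₂ / d * b') * (u₂ * v₁ / d * b') ∧
        (n : ℤ) ∣ 2 * a + u₁ * v₂ / d * b')
    (hme : ∃ a b' : ℤ, Int.gcd a b' = 1 ∧
        (m : ℤ) = a * (a + u₁ * v₂ / d * b') - (u₂ * v₂ / d * b') * (u₂ * v₁ / d * b') ∧
        (m : ℤ) ∣ 2 * a + u₁ * v₂ / d * b') :
    n = m :=
  stmt_15_general u v u₁ u₂ v₁ v₂ hu₂ hv₂ hu hv d hd hΔ n m hn hm hne hme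
end

section
/- Let G = {z ∈ ℂ : Im z > 0, −1/2 ≤ Re z < 1/2, |z| ≥ 1} and let τ ∈ G, with L_τ = {m + k·τ : m, k ∈ ℤ}. There exist g ∈ ℂ and λ ∈ ℂ such that g ∉ L_τ, 2·g ∈ L_τ, and λ·L_τ = L_τ + ℤ·g (i.e. the elliptic curve E = ℂ/L_τ admits a cyclic subgroup C of order 2 with E/C ≅ E) if and only if τ² = −1, or τ² = −2, or τ² = −τ − 2. In particular, there are exactly 3 elliptic curves over ℂ, up to isomorphism, admitting a cyclic subgroup C of order 2 with E/C ≅ E. -/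
/-!
Write `L = ℤ + ℤτ` and `L' = L + ℤg`. Since `2L' ⊆ L ⊆ L' = λL`, both `2λ` and `λ⁻¹` multiply
`L` into itself, so their norms are positive integers (determinants of integer matrices) with
product `4`. Norm `1` for `2λ` would put `1/2` and `τ/2` into `L'`, which has index `2` over `L`;
norm `1` for `λ⁻¹` would give `λL = L`. Hence `|2λ|² = 2`. Writing `2λ = a + bτ`, the bound
`(Im τ)² ≥ 3/4` on the fundamental domain forces `b = ±1`, so `τ` is a quadratic integer
`τ² = uτ + v` and `ℤ[τ]` has an element of norm `2`; the fundamental domain leaves exactly three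
such `τ`. Conversely, if `a + τ` has norm `2`, then `g = λ = (a + τ)/2` works.
-/

noncomputable section

open Complex

lemma eq_and_eq_of_intCast_add_mul_eq {τ : ℂ} (hτ : τ.im ≠ 0) {m₁ k₁ m₂ k₂ : ℤ}
    (h : (m₁ : ℂ) + k₁ * τ = m₂ + k₂ * τ) : m₁ = m₂ ∧ k₁ = k₂ := by
  have hk : (k₁ : ℝ) = k₂ := by
    have him := congrArg Complex.im h
    simp only [add_im, intCast_im, mul_im, intCast_re, zero_mul, zero_add, add_zero] at him
    exact mul_right_cancel₀ hτ him
  have hm : (m₁ : ℝ) = m₂ := by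
    have hre := congrArg Complex.re h
    simpa [hk] using hre
  exact ⟨mod_cast hm, mod_cast hk⟩

lemma one_mem_latt (τ : ℂ) : 1 ∈ latt τ := ⟨1, 0, by simp⟩

lemma self_mem_latt (τ : ℂ) : τ ∈ latt τ := ⟨0, 1, by simp⟩

lemma latt_subset_lattAdj (τ g : ℂ) : latt τ ⊆ lattAdj τ g := by
  rintro _ ⟨m, k, rfl⟩
  exact ⟨m, k, 0, by simp⟩

lemma self_mem_lattAdj (τ g : ℂ) : g ∈ lattAdj τ g := ⟨0, 0, 1, by simp⟩

lemma two_mul_mem_latt_of_mem_lattAdj {τ g z : ℂ} (h2g : 2 * g ∈ latt τ)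
    (hz : z ∈ lattAdj τ g) : 2 * z ∈ latt τ := by
  obtain ⟨m, k, hmk⟩ := h2g
  obtain ⟨m', k', l, rfl⟩ := hz
  exact ⟨2 * m' + l * m, 2 * k' + l * k, by push_cast; linear_combination l * hmk⟩

lemma half_tau_not_mem_lattAdj {τ g : ℂ} (hτ : τ.im ≠ 0) (h2g : 2 * g ∈ latt τ)
    (hhalf : (1 / 2 : ℂ) ∈ lattAdj τ g) : τ / 2 ∉ lattAdj τ g := by
  obtain ⟨m, k, hmk⟩ := h2g
  obtain ⟨m₁, k₁, l₁, h₁⟩ := hhalf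
  rintro ⟨m₂, k₂, l₂, h₂⟩
  -- Doubling `1 / 2` and `τ / 2` gives `1 ≡ l₁ • 2g` and `τ ≡ l₂ • 2g` modulo `2L`.
  obtain ⟨hm₁, hk₁⟩ := eq_and_eq_of_intCast_add_mul_eq hτ (m₁ := 2 * m₁ + l₁ * m)
    (k₁ := 2 * k₁ + l₁ * k) (m₂ := 1) (k₂ := 0)
    (by push_cast; linear_combination -2 * h₁ - l₁ * hmk)
  obtain ⟨-, hk₂⟩ := eq_and_eq_of_intCast_add_mul_eq hτ (m₁ := 2 * m₂ + l₂ * m)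
    (k₁ := 2 * k₂ + l₂ * k) (m₂ := 0) (k₂ := 1)
    (by push_cast; linear_combination -2 * h₂ - l₂ * hmk)
  have hl₁ : Odd l₁ := (Int.odd_mul (m := l₁) (n := m)).mp ⟨-m₁, by linarith⟩ |>.1
  have hk : Even k :=
    (Int.even_mul.mp ⟨-k₁, by linarith⟩).resolve_left (Int.not_even_iff_odd.mpr hl₁)
  exact Int.not_even_iff_odd.mpr (Int.odd_mul.mp ⟨-k₂, by linarith⟩).2 hk

lemma coeffs_eq_of_quadratic_root {τ : ℂ} (hτ : τ.im ≠ 0) {b e c : ℝ}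
    (h : (b : ℂ) * τ ^ 2 + e * τ + c = 0) : e = -2 * b * τ.re ∧ c = b * normSq τ := by
  have hre := congrArg Complex.re h
  have him := congrArg Complex.im h
  simp only [pow_two, add_re, add_im, mul_re, mul_im, ofReal_re, ofReal_im, zero_re,
    zero_im] at hre him
  have he : e = -2 * b * τ.re := by
    refine mul_right_cancel₀ hτ ?_
    linear_combination him
  refine ⟨he, ?_⟩
  rw [normSq_apply]
  linear_combination hre - τ.re * he

lemma normSq_intCast_add_intCast_mul (a b : ℤ) (τ : ℂ) :
    normSq (a + b * τ) = (a + b * τ.re) ^ 2 + (b * τ.im) ^ 2 := by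
  simp only [normSq_apply, add_re, add_im, mul_re, mul_im, intCast_re, intCast_im]
  ring

lemma normSq_eq_det {τ α : ℂ} (hτ : τ.im ≠ 0) {a b c d : ℤ} (hα : α = a + b * τ)
    (hατ : α * τ = c + d * τ) : normSq α = a * d - b * c := by
  have hroot : ((b : ℝ) : ℂ) * τ ^ 2 + ((a - d : ℝ) : ℂ) * τ + ((-c : ℝ) : ℂ) = 0 := by
    push_cast
    linear_combination hατ - τ * hα
  obtain ⟨he, hc⟩ := coeffs_eq_of_quadratic_root hτ hroot
  rw [hα, normSq_intCast_add_intCast_mul]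
  rw [normSq_apply] at hc
  linear_combination a * he - b * hc

def IsMultiplier (τ α : ℂ) : Prop := α ∈ latt τ ∧ α * τ ∈ latt τ

namespace IsMultiplier

variable {τ α : ℂ}

lemma mul_mem (hα : IsMultiplier τ α) {z : ℂ} (hz : z ∈ latt τ) : α * z ∈ latt τ := by
  obtain ⟨⟨p, q, hp⟩, ⟨r, s, hr⟩⟩ := hα
  obtain ⟨m, k, rfl⟩ := hz
  exact ⟨m * p + k * r, m * q + k * s, by push_cast; linear_combination m * hp + k * hr⟩

lemma exists_normSq_eq_intCast (hτ : τ.im ≠ 0) (hα : IsMultiplier τ α) :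
    ∃ n : ℤ, normSq α = n := by
  obtain ⟨⟨a, b, hab⟩, ⟨c, d, hcd⟩⟩ := hα
  exact ⟨a * d - b * c, by rw [normSq_eq_det hτ hab hcd]; push_cast; rfl⟩

lemma inv (hτ : τ.im ≠ 0) (hα : IsMultiplier τ α) (h1 : normSq α = 1) :
    IsMultiplier τ α⁻¹ := by
  obtain ⟨⟨p, q, hp⟩, ⟨r, s, hr⟩⟩ := hα
  have hdet : (p * s - q * r : ℂ) = 1 := by
    have hdetℝ := normSq_eq_det hτ hp hr
    rw [h1] at hdetℝ
    exact_mod_cast hdetℝ.symm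
  have hinv : α⁻¹ = s - q * τ :=
    inv_eq_of_mul_eq_one_right (by linear_combination s * hp - q * hr + hdet)
  refine ⟨⟨s, -q, by rw [hinv]; push_cast; ring⟩, ⟨-r, p, ?_⟩⟩
  rw [hinv]
  push_cast
  linear_combination τ * hp - hr

end IsMultiplier

section Isogeny

variable {τ g lam : ℂ}

lemma isMultiplier_two_mul (h2g : 2 * g ∈ latt τ)
    (heq : (fun x => lam * x) '' latt τ = lattAdj τ g) : IsMultiplier τ (2 * lam) := by
  have hlam : lam ∈ lattAdj τ g := heq ▸ ⟨1, one_mem_latt τ, mul_one lam⟩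
  have hlamτ : lam * τ ∈ lattAdj τ g := heq ▸ ⟨τ, self_mem_latt τ, rfl⟩
  refine ⟨two_mul_mem_latt_of_mem_lattAdj h2g hlam, ?_⟩
  rw [mul_assoc]
  exact two_mul_mem_latt_of_mem_lattAdj h2g hlamτ

lemma ne_zero_of_image_mul_eq_lattAdj (heq : (fun x => lam * x) '' latt τ = lattAdj τ g) :
    lam ≠ 0 := by
  obtain ⟨w, -, hw1⟩ : (1 : ℂ) ∈ (fun x => lam * x) '' latt τ :=
    heq ▸ latt_subset_lattAdj τ g (one_mem_latt τ)
  exact left_ne_zero_of_mul_eq_one hw1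

lemma isMultiplier_inv (heq : (fun x => lam * x) '' latt τ = lattAdj τ g) :
    IsMultiplier τ lam⁻¹ := by
  obtain ⟨w, hw, hw1⟩ : (1 : ℂ) ∈ (fun x => lam * x) '' latt τ :=
    heq ▸ latt_subset_lattAdj τ g (one_mem_latt τ)
  obtain ⟨w', hw', rfl⟩ : τ ∈ (fun x => lam * x) '' latt τ :=
    heq ▸ latt_subset_lattAdj τ g (self_mem_latt τ)
  have hlam : lam ≠ 0 := left_ne_zero_of_mul_eq_one hw1
  refine ⟨inv_eq_of_mul_eq_one_right hw1 ▸ hw, ?_⟩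
  simpa only [inv_mul_cancel_left₀ hlam] using hw'

lemma normSq_two_mul_ne_one (hτ : τ.im ≠ 0) (h2g : 2 * g ∈ latt τ)
    (heq : (fun x => lam * x) '' latt τ = lattAdj τ g) : normSq (2 * lam) ≠ 1 := by
  intro h1
  have hinv := (isMultiplier_two_mul h2g heq).inv hτ h1
  have hlam := ne_zero_of_image_mul_eq_lattAdj heq
  have hhalf : (1 / 2 : ℂ) ∈ lattAdj τ g := heq ▸ ⟨_, hinv.1, by field_simp⟩
  exact half_tau_not_mem_lattAdj hτ h2g hhalf (heq ▸ ⟨_, hinv.2, by field_simp⟩)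

lemma normSq_inv_ne_one (hτ : τ.im ≠ 0) (hg : g ∉ latt τ)
    (heq : (fun x => lam * x) '' latt τ = lattAdj τ g) : normSq lam⁻¹ ≠ 1 := by
  intro h1
  have hlam := (isMultiplier_inv heq).inv hτ h1
  rw [inv_inv] at hlam
  obtain ⟨w, hw, rfl⟩ : g ∈ (fun x => lam * x) '' latt τ := heq ▸ self_mem_lattAdj τ g
  exact hg (hlam.mul_mem hw)

lemma normSq_two_mul_eq_two (hτ : τ.im ≠ 0) (hg : g ∉ latt τ) (h2g : 2 * g ∈ latt τ)
    (heq : (fun x => lam * x) '' latt τ = lattAdj τ g) : normSq (2 * lam) = 2 := by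
  obtain ⟨n, hn⟩ := (isMultiplier_two_mul h2g heq).exists_normSq_eq_intCast hτ
  obtain ⟨m, hm⟩ := (isMultiplier_inv heq).exists_normSq_eq_intCast hτ
  have hlam := ne_zero_of_image_mul_eq_lattAdj heq
  have hnm : n * m = 4 := by
    have hprod : normSq (2 * lam) * normSq lam⁻¹ = 4 := by
      rw [← map_mul, mul_assoc, mul_inv_cancel₀ hlam, mul_one, normSq_ofNat]; norm_num
    rw [hn, hm] at hprod
    exact_mod_cast hprod
  have hn0 : 0 ≤ n := by exact_mod_cast hn ▸ normSq_nonneg (2 * lam)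
  have hm1 : m ≠ 1 := fun h => normSq_inv_ne_one hτ hg heq (by rw [hm, h]; norm_num)
  have hn1 : n ≠ 1 := fun h => normSq_two_mul_ne_one hτ h2g heq (by rw [hn, h]; norm_num)
  have hn2 : n = 2 := by
    have : n ≤ 4 := Int.le_of_dvd (by norm_num) ⟨m, hnm.symm⟩
    interval_cases n <;> omega
  rw [hn, hn2]
  norm_num

end Isogeny

/-- `a ^ 2 + a * u - v` is the norm of `a + τ` when `τ ^ 2 = u * τ + v`. -/
def HasNormTwoElement (τ : ℂ) : Prop :=
  ∃ u v a : ℤ, τ ^ 2 = u * τ + v ∧ a ^ 2 + a * u - v = 2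

lemma IsMultiplier.hasNormTwoElement {τ α : ℂ} (him : 3 / 4 ≤ τ.im ^ 2)
    (hα : IsMultiplier τ α) (h2 : normSq α = 2) : HasNormTwoElement τ := by
  have hτ : τ.im ≠ 0 := by rintro h; rw [h] at him; norm_num at him
  obtain ⟨⟨a, b, hab⟩, ⟨c, d, hcd⟩⟩ := hα
  have hdet : a * d - b * c = 2 := by
    have := normSq_eq_det hτ hab hcd
    rw [h2] at this
    exact_mod_cast this.symm
  have hsq : ((a : ℝ) + b * τ.re) ^ 2 + (b * τ.im) ^ 2 = 2 := by
    rw [← normSq_intCast_add_intCast_mul, ← hab, h2]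
  have hb : b * b = 1 := by
    have hb3 : b * b < 3 := by
      have : (b : ℝ) * b < 3 := by nlinarith [sq_nonneg ((a : ℝ) + b * τ.re)]
      exact_mod_cast this
    have hb0 : b ≠ 0 := by
      rintro rfl
      have ha : a * a = 2 := by
        simp only [Int.cast_zero, zero_mul, add_zero, zero_pow two_ne_zero] at hsq
        rw [← sq]
        exact_mod_cast hsq
      exact Int.sq_ne_two_mod_four a (by rw [ha]; rfl)
    have hb2 : b * b ≠ 2 := fun h => Int.sq_ne_two_mod_four b (by rw [h]; rfl)
    have := mul_self_pos.2 hb0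
    omega
  have hbℂ : (b : ℂ) * b = 1 := by exact_mod_cast hb
  refine ⟨b * (d - a), b * c, a * b, ?_, ?_⟩
  · push_cast
    linear_combination (-τ ^ 2) * hbℂ + b * hcd - b * τ * hab
  · linear_combination a * d * hb + hdet

lemma three_quarters_le_im_sq {τ : ℂ} (hre₁ : -(1 / 2) ≤ τ.re) (hre₂ : τ.re ≤ 1 / 2)
    (habs : 1 ≤ ‖τ‖) : 3 / 4 ≤ τ.im ^ 2 := by
  have hnorm : 1 ≤ τ.re ^ 2 + τ.im ^ 2 := by
    have := Complex.sq_norm τ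
    rw [normSq_apply] at this
    nlinarith
  nlinarith

lemma HasNormTwoElement.sq_eq {τ : ℂ} (hre₁ : -(1 / 2) ≤ τ.re) (hre₂ : τ.re < 1 / 2)
    (habs : 1 ≤ ‖τ‖) (h : HasNormTwoElement τ) :
    τ ^ 2 = -1 ∨ τ ^ 2 = -2 ∨ τ ^ 2 = -τ - 2 := by
  obtain ⟨u, v, a, hsq, h2⟩ := h
  have hτ : τ.im ≠ 0 := by
    have := three_quarters_le_im_sq hre₁ hre₂.le habs
    rintro h; rw [h] at this; norm_num at this
  obtain ⟨hu, hv⟩ := coeffs_eq_of_quadratic_root hτ (b := 1) (e := -u) (c := -v)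
    (by push_cast; linear_combination hsq)
  have hu₁ : -1 ≤ u := by exact_mod_cast (by linarith : (-1 : ℝ) ≤ u)
  have hu₂ : u < 1 := by exact_mod_cast (by linarith : (u : ℝ) < 1)
  have hv₁ : 1 ≤ -v := by
    rw [← Complex.sq_norm] at hv
    exact_mod_cast (by nlinarith : (1 : ℝ) ≤ -v)
  have ha₁ : -1 ≤ a := by nlinarith
  have ha₂ : a ≤ 1 := by nlinarith
  have huv : (u = 0 ∧ v = -1) ∨ (u = 0 ∧ v = -2) ∨ (u = -1 ∧ v = -2) := by
    interval_cases a <;> omega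
  rcases huv with ⟨rfl, rfl⟩ | ⟨rfl, rfl⟩ | ⟨rfl, rfl⟩
  · exact Or.inl (by simp [hsq])
  · exact Or.inr (Or.inl (by simp [hsq]))
  · exact Or.inr (Or.inr (by rw [hsq]; push_cast; ring))

lemma HasNormTwoElement.exists_isogeny {τ : ℂ} (hτ : τ.im ≠ 0) (h : HasNormTwoElement τ) :
    ∃ g lam : ℂ, g ∉ latt τ ∧ (2 : ℂ) * g ∈ latt τ ∧
      (fun x => lam * x) '' latt τ = lattAdj τ g := by
  obtain ⟨u, v, a, hsq, h2⟩ := h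
  have h2ℂ : (a : ℂ) ^ 2 + a * u - v = 2 := by exact_mod_cast h2
  refine ⟨(a + τ) / 2, (a + τ) / 2, ?_, ⟨a, 1, by push_cast; ring⟩, ?_⟩
  · rintro ⟨m, k, hmk⟩
    have := (eq_and_eq_of_intCast_add_mul_eq hτ (m₁ := a) (k₁ := 1) (m₂ := 2 * m)
      (k₂ := 2 * k) (by push_cast; linear_combination 2 * hmk)).2
    omega
  ext z
  constructor
  · rintro ⟨w, ⟨m, k, rfl⟩, rfl⟩
    refine ⟨-k, 0, m + k * (a + u), ?_⟩
    push_cast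
    linear_combination (k / 2) * hsq - (k / 2) * h2ℂ
  · rintro ⟨m, k, l, rfl⟩
    refine ⟨_, ⟨m * (a + u) - k * v + l, k * a - m, rfl⟩, ?_⟩
    push_cast
    linear_combination ((k * a - m) / 2) * hsq + ((m + k * τ) / 2) * h2ℂ

theorem stmt_16_general (τ : ℂ) (hre₁ : -(1 / 2) ≤ τ.re) (hre₂ : τ.re < 1 / 2)
    (habs : 1 ≤ ‖τ‖) :
    (∃ g lam : ℂ, g ∉ latt τ ∧ (2 : ℂ) * g ∈ latt τ ∧
        (fun x => lam * x) '' latt τ = lattAdj τ g) ↔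
    (τ ^ 2 = -1 ∨ τ ^ 2 = -2 ∨ τ ^ 2 = -τ - 2) := by
  have him := three_quarters_le_im_sq hre₁ hre₂.le habs
  have hτ : τ.im ≠ 0 := by rintro h; rw [h] at him; norm_num at him
  constructor
  · rintro ⟨g, lam, hg, h2g, heq⟩
    exact ((isMultiplier_two_mul h2g heq).hasNormTwoElement him
      (normSq_two_mul_eq_two hτ hg h2g heq)).sq_eq hre₁ hre₂ habs
  · rintro (h | h | h)
    · exact HasNormTwoElement.exists_isogeny hτ ⟨0, -1, 1, by simp [h], by norm_num⟩
    · exact HasNormTwoElement.exists_isogeny hτ ⟨0, -2, 0, by simp [h], by norm_num⟩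
    · exact HasNormTwoElement.exists_isogeny hτ ⟨-1, -2, 0, by simp [h]; ring, by norm_num⟩

theorem stmt_16 (τ : ℂ) (him : 0 < τ.im) (hre₁ : -(1 / 2) ≤ τ.re) (hre₂ : τ.re < 1 / 2)
    (habs : 1 ≤ ‖τ‖) :
    (∃ g lam : ℂ, g ∉ latt τ ∧ (2 : ℂ) * g ∈ latt τ ∧
        (fun x => lam * x) '' latt τ = lattAdj τ g) ↔
    (τ ^ 2 = -1 ∨ τ ^ 2 = -2 ∨ τ ^ 2 = -τ - 2) :=
  stmt_16_general τ hre₁ hre₂ habs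
end
end
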